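/- arXiv:2210.11868 — 4 statements merged into one kernel-verified Lean document; each statement's English description precedes it below -/
import Mathlib

section
/- Let d ≥ 3, let ψ be a d-monotone Archimedean generator with pseudo-inverse φ, C = C_ψ, μ_C the associated measure, and let F_K^d(t) := μ_C({x ∈ [0,1]^d : C_ψ(x) ≤ t}) denote the Kendall distribution function of C. Then for every t ∈ (0,1): F_K^d(t) = D^−ψ^{(d−2)}(φ(t)) · ((−1)^{d−1}/(d−1)!) · φ(t)^{d−1} + ∑_{k=0}^{d−2} ψ^{(k)}(φ(t)) · ((−1)^k/k!) · φ(t)^k (with ψ^{(0)} := ψ, so the k = 0 summand equals t). Moreover, if ψ is strict then F_K^d(0) = 0, and if ψ is non-strict (φ(0) < ∞) then F_K^d(0) = D^−ψ^{(d−2)}(φ(0)) · ((−1)^{d−1}/(d−1)!) · φ(0)^{d−1}. -/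
open MeasureTheory Set Filter Topology
open scoped ENNReal NNReal Classical

noncomputable section

/-- Extension of a generator `ψ` to `[0,∞]` with the convention `ψ(∞) := 0`. -/
def psiExt (ψ : ℝ → ℝ) (z : ℝ≥0∞) : ℝ := if z = ∞ then 0 else ψ z.toReal

/-- The pseudo-inverse `φ(y) = inf {z ∈ [0,∞] : ψ(z) = y}` of a generator. -/
def pseudoInv (ψ : ℝ → ℝ) (y : ℝ) : ℝ≥0∞ := sInf {z : ℝ≥0∞ | psiExt ψ z = y}

/-- An Archimedean generator: `ψ : [0,∞) → [0,1]` is continuous, non-increasing,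
satisfies `ψ 0 = 1` and `ψ(z) → 0` as `z → ∞`, and is strictly decreasing on
`[0, inf {z ∈ [0,∞] : ψ z = 0}]`. -/
structure IsGenerator (ψ : ℝ → ℝ) : Prop where
  continuousOn : ContinuousOn ψ (Ici 0)
  mem_Icc : ∀ z : ℝ, 0 ≤ z → ψ z ∈ Icc (0 : ℝ) 1
  map_zero : ψ 0 = 1
  tendsto_atTop : Tendsto ψ atTop (𝓝 0)
  antitoneOn : AntitoneOn ψ (Ici 0)
  strictAnti : ∀ ⦃x y : ℝ⦄, 0 ≤ x → x < y → ENNReal.ofReal y ≤ pseudoInv ψ 0 → ψ y < ψ x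

/-- The left-hand derivative `D⁻f`. -/
def leftDeriv (f : ℝ → ℝ) (z : ℝ) : ℝ := derivWithin f (Iio z) z

/-- The right-hand derivative `D⁺f`. -/
def rightDeriv (f : ℝ → ℝ) (z : ℝ) : ℝ := derivWithin f (Ioi z) z

/-- A `d`-monotone Archimedean generator: the derivatives `ψ⁽ᵏ⁾` exist on `(0,∞)` for
`k = 1,…,d-2`, and `(-1)^(d-2) · ψ^(d-2)` is non-negative, non-increasing and convex
on `(0,∞)`. -/
structure IsdMonotoneGenerator (d : ℕ) (ψ : ℝ → ℝ) : Prop where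
  toIsGenerator : IsGenerator ψ
  differentiable : ∀ k : ℕ, k < d - 2 → ∀ z : ℝ, 0 < z → DifferentiableAt ℝ (deriv^[k] ψ) z
  nonneg : ∀ z : ℝ, 0 < z → 0 ≤ (-1 : ℝ) ^ (d - 2) * deriv^[d - 2] ψ z
  antitoneOn : AntitoneOn (fun z => (-1 : ℝ) ^ (d - 2) * deriv^[d - 2] ψ z) (Ioi 0)
  convexOn : ConvexOn ℝ (Ioi 0) (fun z => (-1 : ℝ) ^ (d - 2) * deriv^[d - 2] ψ z)

/-- The `d`-dimensional Archimedean copula generated by `ψ`: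
`C_ψ(x) = ψ(φ(x₁) + ⋯ + φ(x_d))` (with `ψ(∞) := 0`). -/
def archCopula (d : ℕ) (ψ : ℝ → ℝ) (x : Fin d → ℝ) : ℝ :=
  psiExt ψ (∑ i, pseudoInv ψ (x i))

/-- A generator is strict if `ψ(z) > 0` for all `z ≥ 0`. -/
def IsStrictGenerator (ψ : ℝ → ℝ) : Prop := ∀ z : ℝ, 0 ≤ z → 0 < ψ z

/-- The level set `L_t = {x ∈ [0,1]^d : C_ψ(x) = t}`. -/
def levelSet (d : ℕ) (ψ : ℝ → ℝ) (t : ℝ) : Set (Fin d → ℝ) :=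
  {x | (∀ i, x i ∈ Icc (0 : ℝ) 1) ∧ archCopula d ψ x = t}

/-- The Kendall distribution function `F_K^d(t) = μ_C({x ∈ [0,1]^d : C_ψ(x) ≤ t})`. -/
def kendallDF (d : ℕ) (ψ : ℝ → ℝ) (μ : Measure (Fin d → ℝ)) (t : ℝ) : ℝ :=
  (μ {x | (∀ i, x i ∈ Icc (0 : ℝ) 1) ∧ archCopula d ψ x ≤ t}).toReal


/-!
Write `φ` for the pseudo-inverse of `ψ`. Under `μ_C` the vector `X = (φ(x₁), …, φ(x_d))` has joint
survival function `P(X ≥ w) = ψ(w₁ + ⋯ + w_d)`: up to null faces, `{φ(x_i) ≥ w_i}` is the box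
`∏ [0, ψ(w_i)]`, and `C(ψ(w₁), …, ψ(w_d)) = ψ(w₁ + ⋯ + w_d)`. Since `C(x) ≤ t ↔ φ(t) ≤ ∑ φ(x_i)`,
the Kendall distribution function is `P(∑ X_i ≥ φ(t))`.

To compute `P(∑ X_i ≥ s)`, round `X` down to the grid `hℕ`. The rounded vector `V` has survival
function `ψ(h(c₁ + ⋯ + c_d))` on `ℕ^d`, and splitting according to the value of one coordinate at a
time (with the hockey-stick identity) gives
`P(∑ V_i ≥ m + 1) = ∑_{j<d} C(m+j, j) (-1)^j Δ_h^j ψ((m+1)h)`.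
For `h = s/(m+d+1)` these events squeeze `{∑ X_i ≥ s}` as `m → ∞`. By the mean value theorem,
`Δ_h^j ψ(a) = h^j ψ^(j)(ξ)` for `j ≤ d - 2`, while `Δ_h^(d-1) ψ(a)` is `h^(d-1)` times the slope
of a secant of `ψ^(d-2)` just left of `s`, which tends to `D⁻ψ^(d-2)(s)` by convexity. Finally
`C(m+j, j) h^j → s^j / j!`.
-/

open scoped fwdDiff

namespace ArchimedeanCopula

open Finset in
theorem sum_range_sub_add_choose (m j : ℕ) :
    ∑ q ∈ range (m + 1), (m - q + j).choose j = (m + j + 1).choose (j + 1) := by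
  rw [← Nat.sum_range_add_choose, ← sum_range_reflect]
  refine sum_congr rfl fun q hq => ?_
  have := mem_range.1 hq
  congr 1
  omega

theorem neg_one_pow_mul_neg_one_pow_mul (j : ℕ) (x : ℝ) : (-1) ^ j * ((-1) ^ j * x) = x := by
  rw [← mul_assoc, ← mul_pow, neg_one_mul, neg_neg, one_pow, one_mul]

theorem neg_one_pow_mul_fwdDiff_iter_succ (S : ℕ → ℝ) (j n : ℕ) :
    (-1) ^ j * Δ_[1] ^[j] S n - (-1) ^ j * Δ_[1] ^[j] S (n + 1) =
      (-1) ^ (j + 1) * Δ_[1] ^[j + 1] S n := by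
  rw [Function.iterate_succ_apply', fwdDiff, pow_succ]
  ring

theorem fwdDiff_iter_comp_natCast_mul (f : ℝ → ℝ) (h : ℝ) (j n : ℕ) :
    Δ_[1] ^[j] (fun k : ℕ => f (k * h)) n = Δ_[h] ^[j] f (n * h) := by
  have : Function.Semiconj (fun (g : ℝ → ℝ) (k : ℕ) => g (k * h)) (fwdDiff h) (fwdDiff 1) :=
    fun g => funext fun k => by simp [fwdDiff, add_mul]
  exact (congrFun (this.iterate_right j f) n).symm

section MeanValue

variable {f : ℝ → ℝ} {b h : ℝ} {j : ℕ}

theorem iterate_deriv_fwdDiff (hh : 0 ≤ h)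
    (hf : ∀ k < j, DifferentiableOn ℝ (deriv^[k] f) (Ioi b)) :
    EqOn (deriv^[j] (Δ_[h] f)) (Δ_[h] (deriv^[j] f)) (Ioi b) := by
  induction j with
  | zero => exact fun _ _ => rfl
  | succ j ih =>
    intro z hz
    have hD := hf j j.lt_succ_self
    have hdiff : ∀ y ∈ Ioi b, DifferentiableAt ℝ (deriv^[j] f) y :=
      fun y hy => hD.differentiableAt (isOpen_Ioi.mem_nhds hy)
    have hzh : z + h ∈ Ioi b := lt_add_of_lt_of_nonneg hz hh
    rw [Function.iterate_succ_apply', Function.iterate_succ_apply',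
      ((ih fun k hk => hf k (by omega)).eventuallyEq_of_mem (isOpen_Ioi.mem_nhds hz)).deriv_eq]
    exact (((hdiff _ hzh).hasDerivAt.comp_add_const z h).sub (hdiff z hz).hasDerivAt).deriv

theorem differentiableOn_iterate_deriv_fwdDiff (hh : 0 ≤ h)
    (hf : ∀ k < j, DifferentiableOn ℝ (deriv^[k] f) (Ioi b)) :
    ∀ k < j, DifferentiableOn ℝ (deriv^[k] (Δ_[h] f)) (Ioi b) := by
  intro k hk
  refine DifferentiableOn.congr ?_ (iterate_deriv_fwdDiff hh fun k' hk' => hf k' (by omega))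
  exact ((hf k hk).comp (differentiableOn_id.add_const h)
    fun y hy => lt_add_of_lt_of_nonneg hy hh).sub (hf k hk)

theorem iterate_deriv_fwdDiff_eq_mul_slope (hh : 0 < h)
    (hf : ∀ k < j, DifferentiableOn ℝ (deriv^[k] f) (Ioi b)) {z : ℝ} (hz : b < z) :
    deriv^[j] (Δ_[h] f) z = h * slope (deriv^[j] f) z (z + h) := by
  rw [iterate_deriv_fwdDiff hh.le hf hz, slope_def_field, add_sub_cancel_left,
    mul_div_cancel₀ _ hh.ne', fwdDiff]

theorem exists_fwdDiff_iter_eq (hh : 0 < h) (hf : ∀ k < j, DifferentiableOn ℝ (deriv^[k] f) (Ioi b))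
    {a : ℝ} (ha : b < a) :
    ∃ ξ ∈ Icc a (a + j * h), Δ_[h] ^[j] f a = h ^ j * deriv^[j] f ξ := by
  induction j generalizing f with
  | zero => exact ⟨a, by simp, by simp⟩
  | succ j ih =>
    obtain ⟨ξ, hξ, hΔ⟩ :=
      ih fun k hk => differentiableOn_iterate_deriv_fwdDiff hh.le hf k (by omega)
    have hξb : b < ξ := ha.trans_le hξ.1
    have hD := hf j j.lt_succ_self
    obtain ⟨η, hη, hslope⟩ := exists_deriv_eq_slope' (deriv^[j] f) (lt_add_of_pos_right ξ hh)
      (hD.continuousOn.mono fun y hy => hξb.trans_le hy.1)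
      (hD.mono fun y hy => hξb.trans hy.1)
    refine ⟨η, ⟨hξ.1.trans hη.1.le, ?_⟩, ?_⟩
    · push_cast
      linarith [hη.2, hξ.2]
    · rw [Function.iterate_succ_apply, hΔ, iterate_deriv_fwdDiff_eq_mul_slope hh
        (fun k hk => hf k (by omega)) hξb, ← hslope, Function.iterate_succ_apply', pow_succ]
      ring

theorem exists_fwdDiff_iter_succ_eq (hh : 0 < h)
    (hf : ∀ k < j, DifferentiableOn ℝ (deriv^[k] f) (Ioi b)) {a : ℝ} (ha : b < a) :
    ∃ ξ ∈ Icc a (a + j * h), Δ_[h] ^[j + 1] f a = h ^ (j + 1) * slope (deriv^[j] f) ξ (ξ + h) := by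
  obtain ⟨ξ, hξ, hΔ⟩ :=
    exists_fwdDiff_iter_eq hh (differentiableOn_iterate_deriv_fwdDiff hh.le hf) ha
  refine ⟨ξ, hξ, ?_⟩
  rw [Function.iterate_succ_apply, hΔ, iterate_deriv_fwdDiff_eq_mul_slope hh hf (ha.trans_le hξ.1),
    pow_succ, mul_assoc]

end MeanValue

open Finset in
theorem tendsto_choose_mul_div_add_pow (j : ℕ) (s c : ℝ) :
    Tendsto (fun n : ℕ => ((n + j).choose j : ℝ) * (s / (n + c)) ^ j) atTop
      (𝓝 (s ^ j / j.factorial)) := by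
  -- `(n + j).choose j * j! = (n + 1) ⋯ (n + j)`, and each factor is asymptotic to `n + c`
  have hprod : Tendsto (fun n : ℕ => ∏ i ∈ range j, ((1 + i) + 1 * (n : ℝ)) / (c + 1 * n))
      atTop (𝓝 1) := by
    simpa using tendsto_finsetProd (range j) fun i _ =>
      tendsto_add_mul_div_add_mul_atTop_nhds (1 + i : ℝ) c 1 one_ne_zero
  have hlim : Tendsto (fun n : ℕ => s ^ j / j.factorial *
      ∏ i ∈ range j, ((1 + i) + 1 * (n : ℝ)) / (c + 1 * n)) atTop (𝓝 (s ^ j / j.factorial)) := by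
    simpa using hprod.const_mul (s ^ j / j.factorial)
  refine hlim.congr' ((eventually_gt_atTop ⌈-c⌉₊).mono fun n hn => ?_)
  have hnc : (n : ℝ) + c ≠ 0 := by linarith [Nat.lt_of_ceil_lt hn]
  have hchoose :
      ((n + j).choose j : ℝ) = (∏ i ∈ range j, ((1 + i) + 1 * (n : ℝ))) / j.factorial := by
    rw [eq_div_iff (by positivity), mul_comm]
    exact_mod_cast (Nat.ascFactorial_eq_factorial_mul_choose n j).symm.trans
      (by rw [Nat.ascFactorial_eq_prod_range]; exact prod_congr rfl fun i _ => by ring)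
  dsimp only
  rw [hchoose, div_pow, prod_div_distrib, prod_const, card_range, one_mul]
  rw [add_comm c]
  field_simp

theorem tendsto_measureReal_ofReal_le {α : Type*} [MeasurableSpace α] (ν : Measure α)
    [IsFiniteMeasure ν] {g : α → ℝ≥0∞} (hg : Measurable g) {a : ℕ → ℝ} {s : ℝ}
    (ha_mono : Monotone a) (ha : Tendsto a atTop (𝓝 s)) :
    Tendsto (fun n => ν.real {x | ENNReal.ofReal (a n) ≤ g x}) atTop
      (𝓝 (ν.real {x | ENNReal.ofReal s ≤ g x})) := by
  have hinter : ⋂ n, {x | ENNReal.ofReal (a n) ≤ g x} = {x | ENNReal.ofReal s ≤ g x} := by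
    ext x
    simp only [mem_iInter, mem_ofPred_eq]
    refine ⟨fun hx => le_of_tendsto' ((ENNReal.continuous_ofReal.tendsto s).comp ha)
      hx, fun hx n => le_trans ?_ hx⟩
    exact ENNReal.ofReal_le_ofReal (ha_mono.ge_of_tendsto ha n)
  have hanti : Antitone fun n => {x | ENNReal.ofReal (a n) ≤ g x} :=
    fun m n hmn x hx => le_trans (ENNReal.ofReal_le_ofReal (ha_mono hmn)) hx
  have := tendsto_measure_iInter_atTop
    (fun n => (measurableSet_le measurable_const hg).nullMeasurableSet) hanti
    ⟨0, measure_ne_top ν _⟩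
  rw [hinter] at this
  exact (ENNReal.tendsto_toReal (measure_ne_top ν _)).comp this

theorem _root_.ConvexOn.tendsto_slope_leftDeriv {S : Set ℝ} {f : ℝ → ℝ} (hf : ConvexOn ℝ S f)
    {s : ℝ} (hs : s ∈ interior S) {ι : Type*} {l : Filter ι} {x y : ι → ℝ}
    (hx : Tendsto x l (𝓝 s)) (hxy : ∀ᶠ i in l, x i < y i ∧ y i ≤ s) :
    Tendsto (fun i => slope f (x i) (y i)) l (𝓝 (derivWithin f (Iio s) s)) := by
  have hD : Tendsto (slope f s) (𝓝[<] s) (𝓝 (derivWithin f (Iio s) s)) := by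
    have := (hf.hasDerivWithinAt_leftDeriv_of_mem_interior hs)
    rwa [hasDerivWithinAt_iff_tendsto_slope, sdiff_singleton_eq_self self_notMem_Iio] at this
  -- `x' = 2x - s` is the reflection of `s` in `x`: the secant over `[x', x]` lies below
  -- `slope f x y`, and it equals `2 slope f s x' - slope f s x`, which tends to `D⁻f(s)`
  set x' := fun i => 2 * x i - s
  have hxs : ∀ᶠ i in l, x i < s := hxy.mono fun i h => h.1.trans_le h.2
  have hx_lt : Tendsto x l (𝓝[<] s) := tendsto_nhdsWithin_iff.2 ⟨hx, hxs⟩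
  have hx'_lt : Tendsto x' l (𝓝[<] s) := by
    refine tendsto_nhdsWithin_iff.2 ⟨?_, hxs.mono fun i h => show 2 * x i - s < s by linarith⟩
    simpa [x', two_mul] using (hx.const_mul 2).sub_const s
  have hS := interior_subset (s := S)
  have hxS : ∀ᶠ i in l, x i ∈ S := hx.eventually (mem_interior_iff_mem_nhds.1 hs)
  have hx'S : ∀ᶠ i in l, x' i ∈ S :=
    (tendsto_nhdsWithin_iff.1 hx'_lt).1.eventually (mem_interior_iff_mem_nhds.1 hs)
  refine tendsto_of_tendsto_of_tendsto_of_le_of_le'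
    (g := fun i => 2 * slope f s (x' i) - slope f s (x i)) ?_ (hD.comp hx_lt) ?_ ?_
  · simpa [two_mul] using ((hD.comp hx'_lt).const_mul 2).sub (hD.comp hx_lt)
  · filter_upwards [hxy, hxS, hx'S] with i ⟨hxy, hys⟩ hxS hx'S
    have hyS : y i ∈ S := hf.1.ordConnected.out hxS (hS hs) ⟨hxy.le, hys⟩
    have hxs : x i ≠ s := (hxy.trans_le hys).ne
    have hsec : 2 * slope f s (x' i) - slope f s (x i) = slope f (x i) (x' i) := by
      simp only [slope_def_field, x']
      rw [show 2 * x i - s - s = 2 * (x i - s) by ring, show 2 * x i - s - x i = x i - s by ring]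
      field_simp [sub_ne_zero.2 hxs]
      ring
    rw [hsec]
    exact hf.slope_mono hxS ⟨hx'S, by simp [x']; linarith [(hxy.trans_le hys)]⟩ ⟨hyS, hxy.ne'⟩
      (by simp only [x']; linarith)
  · filter_upwards [hxy, hxS] with i ⟨hxy, hys⟩ hxS
    have hyS : y i ∈ S := hf.1.ordConnected.out hxS (hS hs) ⟨hxy.le, hys⟩
    rw [Function.comp_apply, slope_comm f s]
    exact hf.slope_mono hxS ⟨hyS, hxy.ne'⟩ ⟨hS hs, (hxy.trans_le hys).ne'⟩ hys

section DifferenceQuotient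

variable {f : ℝ → ℝ} {b s : ℝ} {j : ℕ} {ι : Type*} {l : Filter ι} {a h : ι → ℝ}

theorem tendsto_fwdDiff_iter_div_pow (hf : ∀ k < j, DifferentiableOn ℝ (deriv^[k] f) (Ioi b))
    (hcont : ContinuousAt (deriv^[j] f) s) (ha : Tendsto a l (𝓝 s)) (hh : Tendsto h l (𝓝 0))
    (hpos : ∀ i, 0 < h i) (hab : ∀ i, b < a i) :
    Tendsto (fun i => Δ_[h i] ^[j] f (a i) / h i ^ j) l (𝓝 (deriv^[j] f s)) := by
  choose ξ hξ hΔ using fun i => exists_fwdDiff_iter_eq (hpos i) hf (hab i)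
  have hξ_lim : Tendsto ξ l (𝓝 s) := by
    refine tendsto_of_tendsto_of_tendsto_of_le_of_le ha ?_ (fun i => (hξ i).1) (fun i => (hξ i).2)
    simpa using ha.add (hh.const_mul (j : ℝ))
  refine (hcont.tendsto.comp hξ_lim).congr fun i => ?_
  rw [Function.comp_apply, hΔ, mul_div_cancel_left₀ _ (pow_ne_zero _ (hpos i).ne')]

theorem tendsto_fwdDiff_iter_succ_div_pow (hf : ∀ k < j, DifferentiableOn ℝ (deriv^[k] f) (Ioi b))
    (hconv : ConvexOn ℝ (Ioi b) fun z => (-1) ^ j * deriv^[j] f z) (hs : b < s)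
    (ha : Tendsto a l (𝓝 s)) (hpos : ∀ i, 0 < h i) (hab : ∀ i, b < a i)
    (has : ∀ i, a i + (j + 1) * h i ≤ s) :
    Tendsto (fun i => Δ_[h i] ^[j + 1] f (a i) / h i ^ (j + 1)) l
      (𝓝 (leftDeriv (deriv^[j] f) s)) := by
  choose ξ hξ hΔ using fun i => exists_fwdDiff_iter_succ_eq (hpos i) hf (hab i)
  have hξs : ∀ i, ξ i + h i ≤ s := fun i => by linarith [(hξ i).2, has i]
  have hξ_lim : Tendsto ξ l (𝓝 s) := tendsto_of_tendsto_of_tendsto_of_le_of_le ha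
    tendsto_const_nhds (fun i => (hξ i).1) fun i => by linarith [hξs i, hpos i]
  have hs' : s ∈ interior (Ioi b) := by rwa [interior_Ioi]
  have hslope := (hconv.tendsto_slope_leftDeriv hs' hξ_lim
    (Eventually.of_forall fun i => ⟨lt_add_of_pos_right _ (hpos i), hξs i⟩)).const_mul ((-1) ^ j)
  have hleft : leftDeriv (deriv^[j] f) s =
      (-1) ^ j * derivWithin (fun z => (-1) ^ j * deriv^[j] f z) (Iio s) s := by
    rw [← derivWithin_const_mul _ (hconv.differentiableWithinAt_Iio_of_mem_interior hs')]
    simp only [neg_one_pow_mul_neg_one_pow_mul]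
    rfl
  rw [hleft]
  refine hslope.congr fun i => ?_
  rw [hΔ, mul_div_cancel_left₀ _ (pow_ne_zero _ (hpos i).ne'), slope_def_field, slope_def_field,
    mul_div_assoc', mul_sub, neg_one_pow_mul_neg_one_pow_mul, neg_one_pow_mul_neg_one_pow_mul]

end DifferenceQuotient

theorem continuousAt_iterate_deriv {f : ℝ → ℝ} {b : ℝ} {e : ℕ}
    (hdiff : ∀ k < e, DifferentiableOn ℝ (deriv^[k] f) (Ioi b))
    (hconv : ConvexOn ℝ (Ioi b) fun z => (-1) ^ e * deriv^[e] f z) {j : ℕ} (hj : j ≤ e) {z : ℝ}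
    (hz : b < z) : ContinuousAt (deriv^[j] f) z := by
  rcases hj.lt_or_eq with hj | rfl
  · exact ((hdiff j hj).differentiableAt (Ioi_mem_nhds hz)).continuousAt
  · have hF := (hconv.continuousOn isOpen_Ioi).continuousAt (Ioi_mem_nhds hz)
    simpa only [neg_one_pow_mul_neg_one_pow_mul] using hF.const_mul ((-1 : ℝ) ^ j)

section Discrete

variable {d : ℕ}

def partialSumEvent (s : Finset (Fin d)) (p : ℕ) (c : Fin d → ℕ) : Set (Fin d → ℕ∞) :=
  {v | (∀ i ∉ s, (c i : ℕ∞) ≤ v i) ∧ (p : ℕ∞) ≤ ∑ i ∈ s, v i}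

theorem partialSumEvent_empty (p : ℕ) (c : Fin d → ℕ) :
    partialSumEvent ∅ (p + 1) c = ∅ := by
  ext v
  simp [partialSumEvent]

theorem partialSumEvent_zero (s : Finset (Fin d)) (c : Fin d → ℕ) :
    partialSumEvent s 0 c = {v | ∀ i, ((if i ∈ s then 0 else c i : ℕ) : ℕ∞) ≤ v i} := by
  ext v
  simp only [partialSumEvent, Nat.cast_zero, zero_le, and_true, mem_ofPred_eq]
  refine forall_congr' fun i => ?_
  by_cases hi : i ∈ s <;> simp [hi]

theorem forall_notMem_update_le_iff {s : Finset (Fin d)} {a : Fin d} (ha : a ∉ s)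
    (c : Fin d → ℕ) (q : ℕ) (v : Fin d → ℕ∞) :
    (∀ i ∉ s, ((Function.update c a q i : ℕ) : ℕ∞) ≤ v i) ↔
      (q : ℕ∞) ≤ v a ∧ ∀ i ∉ insert a s, (c i : ℕ∞) ≤ v i := by
  constructor
  · intro h
    refine ⟨by simpa using h a ha, fun i hi => ?_⟩
    rw [Finset.mem_insert, not_or] at hi
    simpa [Function.update_of_ne hi.1] using h i hi.2
  · rintro ⟨hq, h⟩ i hi
    by_cases hia : i = a
    · subst hia; simpa using hq
    · simpa [Function.update_of_ne hia] using h i (by simp [hia, hi])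

theorem mem_partialSumEvent_update {s : Finset (Fin d)} {a : Fin d} (ha : a ∉ s) {p q : ℕ}
    {c : Fin d → ℕ} {v : Fin d → ℕ∞} :
    v ∈ partialSumEvent s p (Function.update c a q) ↔
      (q : ℕ∞) ≤ v a ∧ (∀ i ∉ insert a s, (c i : ℕ∞) ≤ v i) ∧ (p : ℕ∞) ≤ ∑ i ∈ s, v i := by
  rw [partialSumEvent, mem_ofPred_eq, forall_notMem_update_le_iff ha, and_assoc]

theorem partialSumEvent_update_succ_subset {s : Finset (Fin d)} {a : Fin d} (ha : a ∉ s)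
    (p q : ℕ) (c : Fin d → ℕ) :
    partialSumEvent s p (Function.update c a (q + 1)) ⊆
      partialSumEvent s p (Function.update c a q) := by
  intro v hv
  rw [mem_partialSumEvent_update ha] at hv ⊢
  exact ⟨le_trans (by exact_mod_cast q.le_succ) hv.1, hv.2⟩

theorem mem_partialSumEvent_update_diff {s : Finset (Fin d)} {a : Fin d} (ha : a ∉ s) {p q : ℕ}
    {c : Fin d → ℕ} {v : Fin d → ℕ∞} :
    v ∈ partialSumEvent s p (Function.update c a q) \
        partialSumEvent s p (Function.update c a (q + 1)) ↔
      v a = q ∧ (∀ i ∉ insert a s, (c i : ℕ∞) ≤ v i) ∧ (p : ℕ∞) ≤ ∑ i ∈ s, v i := by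
  rw [Set.mem_sdiff, mem_partialSumEvent_update ha, mem_partialSumEvent_update ha]
  induction v a using ENat.recTopCoe with
  | top => simp
  | coe n =>
    norm_cast
    constructor
    · rintro ⟨⟨hq, hT⟩, hq'⟩
      exact ⟨by grind, hT⟩
    · rintro ⟨rfl, hT⟩
      exact ⟨⟨le_rfl, hT⟩, fun h => by grind⟩

theorem natCast_succ_le_add_iff (m : ℕ) (x y : ℕ∞) :
    ((m + 1 : ℕ) : ℕ∞) ≤ x + y ↔
      (∃ q < m + 1, x = q ∧ ((m - q + 1 : ℕ) : ℕ∞) ≤ y) ∨ ((m + 1 : ℕ) : ℕ∞) ≤ x := by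
  induction x using ENat.recTopCoe with
  | top => simp
  | coe n =>
    induction y using ENat.recTopCoe with
    | top =>
      simp only [add_top, le_top, true_iff]
      by_cases hn : n < m + 1
      · exact Or.inl ⟨n, hn, rfl, trivial⟩
      · exact Or.inr (by exact_mod_cast (by omega : m + 1 ≤ n))
    | coe k =>
      norm_cast
      constructor
      · intro h
        by_cases hn : n < m + 1
        · exact Or.inl ⟨n, hn, rfl, by omega⟩
        · exact Or.inr (by omega)
      · rintro (⟨q, hq, rfl, h⟩ | h) <;> omega

theorem partialSumEvent_insert {s : Finset (Fin d)} {a : Fin d} (ha : a ∉ s) (m : ℕ)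
    (c : Fin d → ℕ) :
    partialSumEvent (insert a s) (m + 1) c =
      (⋃ q ∈ Finset.range (m + 1), partialSumEvent s (m - q + 1) (Function.update c a q) \
          partialSumEvent s (m - q + 1) (Function.update c a (q + 1))) ∪
        partialSumEvent s 0 (Function.update c a (m + 1)) := by
  ext v
  simp only [mem_union, mem_iUnion, Finset.mem_range, exists_prop,
    mem_partialSumEvent_update_diff ha, mem_partialSumEvent_update ha]
  simp only [partialSumEvent, mem_ofPred_eq, Finset.sum_insert ha, natCast_succ_le_add_iff,
    Nat.cast_zero, zero_le, and_true]
  grind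

theorem sum_compl_update {s : Finset (Fin d)} {a : Fin d} (ha : a ∉ s) (c : Fin d → ℕ) (q : ℕ) :
    ∑ i ∈ sᶜ, Function.update c a q i = q + ∑ i ∈ (insert a s)ᶜ, c i := by
  have hsplit : sᶜ = insert a (insert a s)ᶜ := by ext i; by_cases hi : i = a <;> simp [hi, ha]
  rw [hsplit, Finset.sum_insert (by simp), Function.update_self]
  congr 1
  exact Finset.sum_congr rfl fun i hi => Function.update_of_ne (by aesop) _ _

theorem pairwiseDisjoint_partialSumEvent_update_diff {s : Finset (Fin d)} {a : Fin d} (ha : a ∉ s)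
    (m : ℕ) (c : Fin d → ℕ) :
    (↑(Finset.range (m + 1)) : Set ℕ).PairwiseDisjoint fun q =>
      partialSumEvent s (m - q + 1) (Function.update c a q) \
        partialSumEvent s (m - q + 1) (Function.update c a (q + 1)) := by
  intro q _ q' _ hqq'
  refine Set.disjoint_left.2 fun v hv hv' => hqq' ?_
  rw [mem_partialSumEvent_update_diff ha] at hv hv'
  exact_mod_cast hv.1.symm.trans hv'.1

theorem disjoint_partialSumEvent_update_diff {s : Finset (Fin d)} {a : Fin d} (ha : a ∉ s)
    (m : ℕ) (c : Fin d → ℕ) :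
    Disjoint (⋃ q ∈ Finset.range (m + 1), partialSumEvent s (m - q + 1) (Function.update c a q) \
        partialSumEvent s (m - q + 1) (Function.update c a (q + 1)))
      (partialSumEvent s 0 (Function.update c a (m + 1))) := by
  refine Set.disjoint_left.2 fun v hv hv' => ?_
  obtain ⟨q, hq, hv⟩ := mem_iUnion₂.1 hv
  rw [mem_partialSumEvent_update_diff ha] at hv
  rw [mem_partialSumEvent_update ha, hv.1] at hv'
  have := Finset.mem_range.1 hq
  exact absurd hv'.1 (by norm_cast; omega)

variable {ν : Measure (Fin d → ℕ∞)} {S : ℕ → ℝ}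

theorem measureReal_partialSumEvent_zero
    (hS : ∀ c : Fin d → ℕ, ν.real {v | ∀ i, (c i : ℕ∞) ≤ v i} = S (∑ i, c i))
    (s : Finset (Fin d)) (c : Fin d → ℕ) :
    ν.real (partialSumEvent s 0 c) = S (∑ i ∈ sᶜ, c i) := by
  rw [partialSumEvent_zero, hS, Finset.sum_ite, Finset.sum_const_zero, zero_add]
  congr 1
  exact Finset.sum_congr (by ext; simp) fun _ _ => rfl

open Finset in
theorem measureReal_partialSumEvent [IsFiniteMeasure ν]
    (hS : ∀ c : Fin d → ℕ, ν.real {v | ∀ i, (c i : ℕ∞) ≤ v i} = S (∑ i, c i))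
    (s : Finset (Fin d)) (m : ℕ) (c : Fin d → ℕ) :
    ν.real (partialSumEvent s (m + 1) c) =
      ∑ j ∈ range #s,
        ((m + j).choose j : ℝ) * ((-1) ^ j * Δ_[1] ^[j] S (m + 1 + ∑ i ∈ sᶜ, c i)) := by
  induction s using Finset.induction_on generalizing m c with
  | empty => simp [partialSumEvent_empty]
  | insert a s ha ih =>
    set K := ∑ i ∈ (insert a s)ᶜ, c i
    have hpiece : ∀ q ∈ range (m + 1),
        ν.real (partialSumEvent s (m - q + 1) (Function.update c a q) \
          partialSumEvent s (m - q + 1) (Function.update c a (q + 1))) =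
        ∑ j ∈ range #s, ((m - q + j).choose j : ℝ) *
          ((-1) ^ (j + 1) * Δ_[1] ^[j + 1] S (m + 1 + K)) := by
      intro q hq
      have hqm := mem_range.1 hq
      rw [measureReal_sdiff (partialSumEvent_update_succ_subset ha _ _ _) .of_discrete, ih, ih,
        sum_compl_update ha, sum_compl_update ha, ← sum_sub_distrib]
      refine sum_congr rfl fun j _ => ?_
      rw [← neg_one_pow_mul_fwdDiff_iter_succ, show m - q + 1 + (q + K) = m + 1 + K by omega,
        show m - q + 1 + (q + 1 + K) = m + 1 + K + 1 by omega]
      ring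
    rw [partialSumEvent_insert ha, measureReal_union (disjoint_partialSumEvent_update_diff ha m c)
      .of_discrete (measure_ne_top _ _), measureReal_biUnion_finset
        (pairwiseDisjoint_partialSumEvent_update_diff ha m c) fun _ _ => .of_discrete,
      sum_congr rfl hpiece, sum_comm, measureReal_partialSumEvent_zero hS,
      sum_compl_update ha, card_insert_of_notMem ha, sum_range_succ']
    simp_rw [← sum_mul, ← Nat.cast_sum, sum_range_sub_add_choose, ← add_assoc]
    simp [K]

end Discrete

section Grid

variable {d : ℕ} {s : ℝ}

def gridCount (h : ℝ) (z : ℝ≥0∞) : ℕ∞ := if z = ∞ then ⊤ else ⌊z.toReal / h⌋₊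

theorem natCast_le_gridCount_iff {h : ℝ} (hh : 0 < h) {k : ℕ} {z : ℝ≥0∞} :
    (k : ℕ∞) ≤ gridCount h z ↔ ENNReal.ofReal (k * h) ≤ z := by
  rw [gridCount]
  split_ifs with hz
  · simp [hz]
  · rw [Nat.cast_le, Nat.le_floor_iff (div_nonneg ENNReal.toReal_nonneg hh.le), le_div_iff₀ hh,
      ENNReal.ofReal_le_iff_le_toReal hz]

theorem measurable_gridCount (h : ℝ) : Measurable (gridCount h) :=
  Measurable.ite (measurableSet_singleton ∞) measurable_const
    (measurable_from_top.comp (ENNReal.measurable_toReal.div_const h).nat_floor)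

theorem gridCount_mul_le {h : ℝ} (hh : 0 < h) (z : ℝ≥0∞) :
    (gridCount h z : ℝ≥0∞) * ENNReal.ofReal h ≤ z := by
  rw [gridCount]
  split_ifs with hz
  · simp [hz]
  · rw [ENat.toENNReal_coe, ← ENNReal.ofReal_natCast, ← ENNReal.ofReal_mul (Nat.cast_nonneg _),
      ENNReal.ofReal_le_iff_le_toReal hz, ← le_div_iff₀ hh]
    exact Nat.floor_le (div_nonneg ENNReal.toReal_nonneg hh.le)

theorem le_gridCount_add_one_mul {h : ℝ} (hh : 0 < h) (z : ℝ≥0∞) :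
    z ≤ ((gridCount h z : ℝ≥0∞) + 1) * ENNReal.ofReal h := by
  rw [gridCount]
  split_ifs with hz
  · simp [hz, hh]
  · rw [ENat.toENNReal_coe, ← ENNReal.ofReal_natCast, ← ENNReal.ofReal_one,
      ← ENNReal.ofReal_add (Nat.cast_nonneg _) zero_le_one,
      ← ENNReal.ofReal_mul (by positivity)]
    conv_lhs => rw [← ENNReal.ofReal_toReal hz]
    exact ENNReal.ofReal_le_ofReal ((div_le_iff₀ hh).1 (Nat.lt_floor_add_one _).le)

theorem toENNReal_sum {ι : Type*} (s : Finset ι) (f : ι → ℕ∞) :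
    ((∑ i ∈ s, f i : ℕ∞) : ℝ≥0∞) = ∑ i ∈ s, (f i : ℝ≥0∞) :=
  map_sum ENat.toENNRealRingHom f s

theorem natCast_le_sum_gridCount {h : ℝ} (hh : 0 < h) {n : ℕ} {z : Fin d → ℝ≥0∞}
    (hz : ENNReal.ofReal ((n + d + 1) * h) ≤ ∑ i, z i) :
    ((n + 1 : ℕ) : ℕ∞) ≤ ∑ i, gridCount h (z i) := by
  have hle : ∑ i, z i ≤ ((∑ i, gridCount h (z i) : ℕ∞) + d) * ENNReal.ofReal h := by
    calc ∑ i, z i ≤ ∑ i, ((gridCount h (z i) : ℝ≥0∞) + 1) * ENNReal.ofReal h :=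
          Finset.sum_le_sum fun i _ => le_gridCount_add_one_mul hh (z i)
      _ = _ := by simp [← Finset.sum_mul, Finset.sum_add_distrib, toENNReal_sum]
  rw [ENNReal.ofReal_mul (by positivity)] at hz
  have := (ENNReal.mul_le_mul_iff_left (by simpa using hh) ENNReal.ofReal_ne_top).1 (hz.trans hle)
  rw [← ENat.toENNReal_le]
  rw [show (n : ℝ) + d + 1 = ((n + 1 + d : ℕ) : ℝ) by push_cast; ring, ENNReal.ofReal_natCast,
    Nat.cast_add] at this
  simpa using (ENNReal.add_le_add_iff_right (by simp)).1 this

theorem ofReal_le_sum_of_natCast_le_sum_gridCount {h : ℝ} (hh : 0 < h) {n : ℕ}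
    {z : Fin d → ℝ≥0∞} (hz : ((n + 1 : ℕ) : ℕ∞) ≤ ∑ i, gridCount h (z i)) :
    ENNReal.ofReal ((n + 1) * h) ≤ ∑ i, z i := by
  calc ENNReal.ofReal ((n + 1) * h) = ((n + 1 : ℕ) : ℕ∞) * ENNReal.ofReal h := by
        rw [ENNReal.ofReal_mul (by positivity)]; norm_cast
    _ ≤ (∑ i, gridCount h (z i) : ℕ∞) * ENNReal.ofReal h := by
        gcongr
    _ ≤ ∑ i, z i := by
        rw [toENNReal_sum, Finset.sum_mul]
        exact Finset.sum_le_sum fun i _ => gridCount_mul_le hh (z i)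

/-- The mesh for which `{s ≤ ∑ z} ⊆ {n + 1 ≤ ∑ ⌊z / h⌋} ⊆ {(n + 1) h ≤ ∑ z}`. -/
def gridStep (d : ℕ) (s : ℝ) (n : ℕ) : ℝ := s / (n + (d + 1))

theorem gridStep_pos (hs : 0 < s) (n : ℕ) : 0 < gridStep d s n := by
  unfold gridStep; positivity

theorem add_mul_gridStep (n : ℕ) : (n + d + 1) * gridStep d s n = s := by
  unfold gridStep
  rw [← add_assoc, mul_div_cancel₀ _ (by positivity)]

theorem tendsto_choose_mul_gridStep_pow (j : ℕ) :
    Tendsto (fun n : ℕ => ((n + j).choose j : ℝ) * gridStep d s n ^ j) atTop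
      (𝓝 (s ^ j / j.factorial)) :=
  tendsto_choose_mul_div_add_pow j s (d + 1)

theorem tendsto_gridStep : Tendsto (gridStep d s) atTop (𝓝 0) :=
  tendsto_const_nhds.div_atTop (tendsto_atTop_add_const_right _ _ tendsto_natCast_atTop_atTop)

theorem tendsto_succ_mul_gridStep :
    Tendsto (fun n : ℕ => (n + 1) * gridStep d s n) atTop (𝓝 s) := by
  have := tendsto_add_mul_div_add_mul_atTop_nhds s (d + 1 : ℝ) s one_ne_zero
  rw [div_one] at this
  refine this.congr fun n => ?_
  unfold gridStep
  rw [mul_div_assoc', one_mul, add_comm (d + 1 : ℝ)]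
  ring

theorem monotone_succ_mul_gridStep (hs : 0 ≤ s) :
    Monotone fun n : ℕ => (n + 1) * gridStep d s n := by
  intro m n hmn
  have hmn' : (m : ℝ) ≤ n := by exact_mod_cast hmn
  simp only [gridStep, mul_div_assoc']
  rw [div_le_div_iff₀ (by positivity) (by positivity)]
  nlinarith [mul_nonneg (mul_nonneg hs (sub_nonneg.2 hmn')) (Nat.cast_nonneg d)]

end Grid

section Survival

variable {d : ℕ} {ψ : ℝ → ℝ} {ν : Measure (Fin d → ℝ≥0∞)} {s : ℝ}

def HasAdditiveSurvival (ψ : ℝ → ℝ) (ν : Measure (Fin d → ℝ≥0∞)) : Prop :=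
  ∀ w : Fin d → ℝ, (∀ i, 0 ≤ w i) → ν.real {z | ∀ i, ENNReal.ofReal (w i) ≤ z i} = ψ (∑ i, w i)

theorem measurable_gridCount_comp (h : ℝ) :
    Measurable fun (z : Fin d → ℝ≥0∞) i => gridCount h (z i) :=
  measurable_pi_lambda _ fun i => (measurable_gridCount h).comp (measurable_pi_apply i)

theorem HasAdditiveSurvival.measureReal_map_gridCount (hν : HasAdditiveSurvival ψ ν) {h : ℝ}
    (hh : 0 < h) (c : Fin d → ℕ) :
    (ν.map fun z i => gridCount h (z i)).real {v | ∀ i, (c i : ℕ∞) ≤ v i} =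
      ψ ((∑ i, c i : ℕ) * h) := by
  rw [map_measureReal_apply (measurable_gridCount_comp h) .of_discrete]
  simp only [preimage_ofPred_eq, natCast_le_gridCount_iff hh]
  rw [hν _ fun i => by positivity, Nat.cast_sum, Finset.sum_mul]

open Finset in
theorem HasAdditiveSurvival.measureReal_natCast_le_sum_gridCount [IsFiniteMeasure ν]
    (hν : HasAdditiveSurvival ψ ν) {h : ℝ} (hh : 0 < h) (n : ℕ) :
    ν.real {z | ((n + 1 : ℕ) : ℕ∞) ≤ ∑ i, gridCount h (z i)} =
      ∑ j ∈ range d, ((n + j).choose j : ℝ) * ((-1) ^ j * Δ_[h] ^[j] ψ ((n + 1) * h)) := by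
  have hevent : {z : Fin d → ℝ≥0∞ | ((n + 1 : ℕ) : ℕ∞) ≤ ∑ i, gridCount h (z i)} =
      (fun z i => gridCount h (z i)) ⁻¹' partialSumEvent univ (n + 1) 0 := by
    ext z
    simp [partialSumEvent]
  rw [hevent, ← map_measureReal_apply (measurable_gridCount_comp h) .of_discrete,
    measureReal_partialSumEvent (S := fun k : ℕ => ψ (k * h)) (hν.measureReal_map_gridCount hh)
      univ n 0]
  simp [fwdDiff_iter_comp_natCast_mul]

theorem HasAdditiveSurvival.measureReal_top_le_sum [IsFiniteMeasure ν]
    (hν : HasAdditiveSurvival ψ ν) (hψ : Tendsto ψ atTop (𝓝 0)) :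
    ν.real {z | ∞ ≤ ∑ i, z i} = 0 := by
  have hcoord : ∀ i, ν.real {z | z i = ∞} = 0 := by
    intro i
    refine le_antisymm (ge_of_tendsto' (hψ.comp tendsto_natCast_atTop_atTop) fun n => ?_)
      measureReal_nonneg
    calc ν.real {z | z i = ∞}
        ≤ ν.real {z | ∀ j, ENNReal.ofReal ((Pi.single i (n : ℝ) : Fin d → ℝ) j) ≤ z j} :=
          measureReal_mono (fun z (hz : z i = ∞) j => by
            by_cases hj : j = i
            · subst hj; simp [hz]
            · simp [hj]) (measure_ne_top _ _)
      _ = ψ n := by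
          rw [hν _ fun j => by by_cases hj : j = i <;> simp [hj], Finset.sum_pi_single']
          simp
  have hunion : {z : Fin d → ℝ≥0∞ | ∞ ≤ ∑ i, z i} = ⋃ i, {z | z i = ∞} := by
    ext z
    simp [ENNReal.sum_eq_top]
  rw [hunion, measureReal_eq_zero_iff]
  exact measure_iUnion_null fun i => (measureReal_eq_zero_iff (measure_ne_top ν _)).1 (hcoord i)

open Finset in
theorem tendsto_sum_choose_mul_fwdDiff_iter (hd : 2 ≤ d)
    (hdiff : ∀ k < d - 2, DifferentiableOn ℝ (deriv^[k] ψ) (Ioi 0))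
    (hconv : ConvexOn ℝ (Ioi 0) fun z => (-1) ^ (d - 2) * deriv^[d - 2] ψ z) (hs : 0 < s)
    {h : ℕ → ℝ} (hpos : ∀ n, 0 < h n) (hh : Tendsto h atTop (𝓝 0))
    (ha : Tendsto (fun n : ℕ => (n + 1) * h n) atTop (𝓝 s)) (has : ∀ n : ℕ, (n + d) * h n ≤ s)
    (hchoose : ∀ j, Tendsto (fun n : ℕ => ((n + j).choose j : ℝ) * h n ^ j) atTop
      (𝓝 (s ^ j / j.factorial))) :
    Tendsto (fun n : ℕ => ∑ j ∈ range d,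
        ((n + j).choose j : ℝ) * ((-1) ^ j * Δ_[h n] ^[j] ψ ((n + 1) * h n))) atTop
      (𝓝 (leftDeriv (deriv^[d - 2] ψ) s * ((-1 : ℝ) ^ (d - 1) / (Nat.factorial (d - 1))) *
          s ^ (d - 1) +
        ∑ k ∈ range (d - 1), deriv^[k] ψ s * ((-1 : ℝ) ^ k / (Nat.factorial k)) * s ^ k)) := by
  obtain ⟨e, rfl⟩ : ∃ e, d = e + 2 := ⟨d - 2, by omega⟩
  rw [show e + 2 - 2 = e by omega] at hdiff hconv ⊢
  rw [show e + 2 - 1 = e + 1 by omega]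
  have hapos : ∀ n : ℕ, 0 < (n + 1) * h n := fun n => mul_pos (by positivity) (hpos n)
  have hfactor : ∀ j (n : ℕ), ((n + j).choose j : ℝ) * ((-1) ^ j * Δ_[h n] ^[j] ψ ((n + 1) * h n)) =
      (-1) ^ j * ((n + j).choose j * h n ^ j) * (Δ_[h n] ^[j] ψ ((n + 1) * h n) / h n ^ j) := by
    intro j n
    field_simp [pow_ne_zero j (hpos n).ne']
  have hlow : Tendsto (fun n : ℕ => ∑ j ∈ range (e + 1),
      (-1) ^ j * ((n + j).choose j * h n ^ j) * (Δ_[h n] ^[j] ψ ((n + 1) * h n) / h n ^ j)) atTop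
      (𝓝 (∑ k ∈ range (e + 1), deriv^[k] ψ s * ((-1 : ℝ) ^ k / (Nat.factorial k)) * s ^ k)) := by
    refine tendsto_finsetSum _ fun j hj => ?_
    have hj : j ≤ e := Nat.lt_succ_iff.1 (mem_range.1 hj)
    convert ((hchoose j).const_mul ((-1 : ℝ) ^ j)).mul (tendsto_fwdDiff_iter_div_pow
      (fun k hk => hdiff k (by omega)) (continuousAt_iterate_deriv hdiff hconv hj hs) ha hh
      hpos hapos) using 2
    ring
  have htop : Tendsto (fun n : ℕ =>
      (-1) ^ (e + 1) * ((n + (e + 1)).choose (e + 1) * h n ^ (e + 1)) *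
        (Δ_[h n] ^[e + 1] ψ ((n + 1) * h n) / h n ^ (e + 1))) atTop
      (𝓝 (leftDeriv (deriv^[e] ψ) s * ((-1 : ℝ) ^ (e + 1) / (Nat.factorial (e + 1))) *
        s ^ (e + 1))) := by
    convert ((hchoose (e + 1)).const_mul ((-1 : ℝ) ^ (e + 1))).mul
      (tendsto_fwdDiff_iter_succ_div_pow hdiff hconv hs ha hpos hapos fun n => by
        push_cast at has ⊢; linarith [has n]) using 2
    ring
  rw [add_comm (leftDeriv _ _ * _ * _)]
  refine (hlow.add htop).congr fun n => ?_
  rw [sum_range_succ _ (e + 1)]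
  simp only [hfactor]

theorem HasAdditiveSurvival.measureReal_ofReal_le_sum [IsFiniteMeasure ν]
    (hν : HasAdditiveSurvival ψ ν) (hd : 2 ≤ d)
    (hdiff : ∀ k < d - 2, DifferentiableOn ℝ (deriv^[k] ψ) (Ioi 0))
    (hconv : ConvexOn ℝ (Ioi 0) fun z => (-1) ^ (d - 2) * deriv^[d - 2] ψ z) (hs : 0 < s) :
    ν.real {z | ENNReal.ofReal s ≤ ∑ i, z i} =
      leftDeriv (deriv^[d - 2] ψ) s * ((-1 : ℝ) ^ (d - 1) / (Nat.factorial (d - 1))) *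
          s ^ (d - 1) +
        ∑ k ∈ Finset.range (d - 1), deriv^[k] ψ s * ((-1 : ℝ) ^ k / (Nat.factorial k)) * s ^ k := by
  have hsum : Measurable fun z : Fin d → ℝ≥0∞ => ∑ i, z i :=
    Finset.measurable_sum _ fun i _ => measurable_pi_apply i
  have hgrid : Tendsto (fun n : ℕ =>
      ν.real {z | ((n + 1 : ℕ) : ℕ∞) ≤ ∑ i, gridCount (gridStep d s n) (z i)}) atTop
      (𝓝 (ν.real {z | ENNReal.ofReal s ≤ ∑ i, z i})) :=
    tendsto_of_tendsto_of_tendsto_of_le_of_le tendsto_const_nhds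
      (tendsto_measureReal_ofReal_le ν hsum (monotone_succ_mul_gridStep hs.le)
        tendsto_succ_mul_gridStep)
      (fun n => measureReal_mono fun z hz =>
        natCast_le_sum_gridCount (gridStep_pos hs n) (by rwa [add_mul_gridStep]))
      (fun n => measureReal_mono fun z hz =>
        ofReal_le_sum_of_natCast_le_sum_gridCount (gridStep_pos hs n) hz)
  simp_rw [hν.measureReal_natCast_le_sum_gridCount (gridStep_pos hs _)] at hgrid
  refine tendsto_nhds_unique hgrid (tendsto_sum_choose_mul_fwdDiff_iter hd hdiff hconv hs
    (gridStep_pos hs) tendsto_gridStep tendsto_succ_mul_gridStep (fun n => ?_)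
    tendsto_choose_mul_gridStep_pow)
  nlinarith [add_mul_gridStep (d := d) (s := s) n, gridStep_pos (d := d) hs n]

end Survival

section Copula

variable {d : ℕ} {ψ : ℝ → ℝ} {μ : Measure (Fin d → ℝ)}

theorem psiExt_ofReal (ψ : ℝ → ℝ) {z : ℝ} (hz : 0 ≤ z) : psiExt ψ (ENNReal.ofReal z) = ψ z := by
  rw [psiExt, if_neg ENNReal.ofReal_ne_top, ENNReal.toReal_ofReal hz]

theorem psiExt_top (ψ : ℝ → ℝ) : psiExt ψ ∞ = 0 := if_pos rfl

theorem psiExt_nonneg (hg : IsGenerator ψ) (z : ℝ≥0∞) : 0 ≤ psiExt ψ z := by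
  rw [psiExt]
  split_ifs
  exacts [le_rfl, (hg.mem_Icc _ ENNReal.toReal_nonneg).1]

theorem antitone_psiExt (hg : IsGenerator ψ) : Antitone (psiExt ψ) := by
  intro z₁ z₂ hz
  rcases eq_or_ne z₂ ∞ with rfl | hz₂
  · rw [psiExt_top]; exact psiExt_nonneg hg z₁
  · rw [psiExt, psiExt, if_neg hz₂, if_neg (ne_top_of_le_ne_top hz₂ hz)]
    exact hg.antitoneOn ENNReal.toReal_nonneg ENNReal.toReal_nonneg
      (ENNReal.toReal_mono hz₂ hz)

theorem continuous_psiExt (hg : IsGenerator ψ) : Continuous (psiExt ψ) := by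
  refine continuous_iff_continuousAt.2 fun x => ?_
  rcases eq_or_ne x ∞ with rfl | hx
  · rw [ContinuousAt, psiExt_top, tendsto_order]
    refine ⟨fun a ha => Eventually.of_forall fun z => ha.trans_le (psiExt_nonneg hg z),
      fun a ha => ?_⟩
    obtain ⟨W, hW⟩ := (hg.tendsto_atTop.eventually (gt_mem_nhds ha)).exists_forall_of_atTop
    filter_upwards [Ioi_mem_nhds (ENNReal.ofReal_lt_top (r := max W 0))] with z hz
    calc psiExt ψ z ≤ psiExt ψ (ENNReal.ofReal (max W 0)) := antitone_psiExt hg hz.le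
      _ < a := by rw [psiExt_ofReal ψ (le_max_right W 0)]; exact hW _ (le_max_left W 0)
  · have hψ : ContinuousAt (ψ ∘ ENNReal.toReal) x := by
      refine (continuousWithinAt_univ _ _).1 ((hg.continuousOn _ ENNReal.toReal_nonneg).comp
        (ENNReal.continuousAt_toReal hx).continuousWithinAt fun z _ => ENNReal.toReal_nonneg)
    refine hψ.congr (eventually_ne_nhds hx |>.mono fun z hz => ?_)
    simp [psiExt, hz]

theorem psiExt_pseudoInv (hg : IsGenerator ψ) {y : ℝ} (hy : y ∈ Icc (0 : ℝ) 1) :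
    psiExt ψ (pseudoInv ψ y) = y := by
  have hmem : y ∈ psiExt ψ '' Icc 0 ∞ := by
    refine intermediate_value_Icc' le_top (continuous_psiExt hg).continuousOn ?_
    rwa [psiExt_top, psiExt, if_neg ENNReal.zero_ne_top, ENNReal.toReal_zero, hg.map_zero]
  obtain ⟨z, -, hz⟩ := hmem
  exact IsClosed.sInf_mem ⟨z, hz⟩ (isClosed_singleton.preimage (continuous_psiExt hg))

theorem pseudoInv_le_iff (hg : IsGenerator ψ) {y : ℝ} (hy : y ∈ Icc (0 : ℝ) 1) {z : ℝ≥0∞} :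
    pseudoInv ψ y ≤ z ↔ psiExt ψ z ≤ y := by
  refine ⟨fun h => (antitone_psiExt hg h).trans (psiExt_pseudoInv hg hy).le, fun h => ?_⟩
  have hmem : y ∈ psiExt ψ '' Icc 0 z := by
    refine intermediate_value_Icc' (zero_le (a := z)) (continuous_psiExt hg).continuousOn ⟨h, ?_⟩
    rw [psiExt, if_neg ENNReal.zero_ne_top, ENNReal.toReal_zero, hg.map_zero]
    exact hy.2
  obtain ⟨z', hz', hy'⟩ := hmem
  exact (sInf_le (α := ℝ≥0∞) hy').trans hz'.2

theorem le_psi_of_ofReal_le_pseudoInv (hg : IsGenerator ψ) {x w : ℝ} (hx : x ∈ Icc (0 : ℝ) 1)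
    (hw : 0 ≤ w) (h : ENNReal.ofReal w ≤ pseudoInv ψ x) : x ≤ ψ w := by
  rw [← psiExt_ofReal ψ hw, ← psiExt_pseudoInv hg hx]
  exact antitone_psiExt hg h

theorem ofReal_le_pseudoInv_iff (hg : IsGenerator ψ) {x w : ℝ} (hx : x ∈ Ioc (0 : ℝ) 1)
    (hw : 0 ≤ w) : ENNReal.ofReal w ≤ pseudoInv ψ x ↔ x ≤ ψ w := by
  refine ⟨le_psi_of_ofReal_le_pseudoInv hg (Ioc_subset_Icc_self hx) hw, fun h => ?_⟩
  by_contra hlt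
  rw [not_le] at hlt
  have hu := psiExt_pseudoInv hg (Ioc_subset_Icc_self hx)
  rw [psiExt, if_neg (ne_top_of_lt hlt)] at hu
  -- `ψ` is flat between `φ(x)` and `w`, at the positive level `x`; strictness forbids this
  have hw0 : ENNReal.ofReal w ≤ pseudoInv ψ 0 := by
    by_contra hw0
    have := (pseudoInv_le_iff hg ⟨le_rfl, zero_le_one⟩).1 (not_le.1 hw0).le
    rw [psiExt_ofReal ψ hw] at this
    linarith [hx.1]
  have := hg.strictAnti ENNReal.toReal_nonneg (ENNReal.toReal_lt_of_lt_ofReal hlt) hw0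
  linarith

theorem psi_eq_zero_of_toReal_pseudoInv_zero_le (hg : IsGenerator ψ) (h0 : pseudoInv ψ 0 ≠ ∞)
    {z : ℝ} (hz : (pseudoInv ψ 0).toReal ≤ z) : ψ z = 0 := by
  have hz0 := ENNReal.toReal_nonneg.trans hz
  have := (pseudoInv_le_iff hg ⟨le_rfl, zero_le_one⟩).1
    ((ENNReal.ofReal_toReal h0).symm.trans_le (ENNReal.ofReal_le_ofReal hz))
  rw [psiExt_ofReal ψ hz0] at this
  exact le_antisymm this (hg.mem_Icc z hz0).1

theorem pseudoInv_ne_top (hg : IsGenerator ψ) {y : ℝ} (hy : y ∈ Ioc (0 : ℝ) 1) :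
    pseudoInv ψ y ≠ ∞ := by
  intro h
  have := psiExt_pseudoInv hg (Ioc_subset_Icc_self hy)
  rw [h, psiExt_top] at this
  exact hy.1.ne this

theorem toReal_pseudoInv_pos (hg : IsGenerator ψ) {y : ℝ} (hy : y ∈ Ico (0 : ℝ) 1)
    (htop : pseudoInv ψ y ≠ ∞) : 0 < (pseudoInv ψ y).toReal := by
  refine ENNReal.toReal_pos (fun h => ?_) htop
  have := psiExt_pseudoInv hg (Ico_subset_Icc_self hy)
  rw [h, psiExt, if_neg ENNReal.zero_ne_top, ENNReal.toReal_zero, hg.map_zero] at this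
  exact hy.2.ne' this

theorem pseudoInv_zero_of_isStrictGenerator (hg : IsGenerator ψ) (hψ : IsStrictGenerator ψ) :
    pseudoInv ψ 0 = ∞ := by
  by_contra h
  have := psiExt_pseudoInv hg ⟨le_rfl, zero_le_one⟩
  rw [psiExt, if_neg h] at this
  exact (hψ _ ENNReal.toReal_nonneg).ne' this

theorem antitoneOn_pseudoInv (hg : IsGenerator ψ) : AntitoneOn (pseudoInv ψ) (Icc 0 1) :=
  fun _ hy₁ _ hy₂ h => (pseudoInv_le_iff hg hy₂).2 ((psiExt_pseudoInv hg hy₁).le.trans h)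

/-- Agrees with `pseudoInv ψ` on `[0,1]`; the clamp makes it antitone, hence measurable, on all
of `ℝ`. -/
def pseudoInvClamp (ψ : ℝ → ℝ) (y : ℝ) : ℝ≥0∞ :=
  pseudoInv ψ (projIcc 0 1 zero_le_one y)

theorem pseudoInvClamp_of_mem {y : ℝ} (hy : y ∈ Icc (0 : ℝ) 1) :
    pseudoInvClamp ψ y = pseudoInv ψ y := by
  rw [pseudoInvClamp, projIcc_of_mem _ hy]

theorem measurable_pseudoInvClamp (hg : IsGenerator ψ) : Measurable (pseudoInvClamp ψ) :=
  Antitone.measurable fun _ _ h =>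
    antitoneOn_pseudoInv hg (projIcc 0 1 _ _).2 (projIcc 0 1 _ _).2 (monotone_projIcc _ h)

theorem archCopula_le_apply (hg : IsGenerator ψ) {x : Fin d → ℝ} (hx : ∀ j, x j ∈ Icc (0 : ℝ) 1)
    (i : Fin d) : archCopula d ψ x ≤ x i :=
  (antitone_psiExt hg (Finset.single_le_sum (fun j _ => zero_le (a := pseudoInv ψ (x j)))
    (Finset.mem_univ i))).trans (psiExt_pseudoInv hg (hx i)).le

theorem archCopula_psi (hg : IsGenerator ψ) {w : Fin d → ℝ} (hw : ∀ i, 0 ≤ w i) :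
    archCopula d ψ (fun i => ψ (w i)) = ψ (∑ i, w i) := by
  have hmem : ∀ i, ψ (w i) ∈ Icc (0 : ℝ) 1 := fun i => hg.mem_Icc _ (hw i)
  by_cases hpos : ∀ i, 0 < ψ (w i)
  · have hinv : ∀ i, pseudoInv ψ (ψ (w i)) = ENNReal.ofReal (w i) := fun i =>
      le_antisymm ((pseudoInv_le_iff hg (hmem i)).2 (psiExt_ofReal ψ (hw i)).le)
        ((ofReal_le_pseudoInv_iff hg ⟨hpos i, (hmem i).2⟩ (hw i)).2 le_rfl)
    rw [archCopula, Finset.sum_congr rfl fun i _ => hinv i,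
      ← ENNReal.ofReal_sum_of_nonneg fun i _ => hw i,
      psiExt_ofReal ψ (Finset.sum_nonneg fun i _ => hw i)]
  · obtain ⟨i, hi⟩ := not_forall.1 hpos
    have hzero : ψ (w i) = 0 := le_antisymm (not_lt.1 hi) (hmem i).1
    have hle : ψ (∑ j, w j) ≤ ψ (w i) := hg.antitoneOn (hw i) (Finset.sum_nonneg fun j _ => hw j)
      (Finset.single_le_sum (fun j _ => hw j) (Finset.mem_univ i))
    refine le_antisymm ((archCopula_le_apply hg hmem i).trans (hzero.trans_le ?_)) ?_
    · exact (hg.mem_Icc _ (Finset.sum_nonneg fun j _ => hw j)).1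
    · exact (hle.trans hzero.le).trans (psiExt_nonneg hg _)

theorem measure_face_eq_zero (hg : IsGenerator ψ)
    (hμ : ∀ x : Fin d → ℝ, (∀ i, x i ∈ Icc (0 : ℝ) 1) →
      μ (univ.pi fun i => Icc 0 (x i)) = ENNReal.ofReal (archCopula d ψ x)) (i : Fin d) :
    μ {x | (∀ j, x j ∈ Icc (0 : ℝ) 1) ∧ x i = 0} = 0 := by
  set y : Fin d → ℝ := Function.update 1 i 0
  have hy : ∀ j, y j ∈ Icc (0 : ℝ) 1 := fun j => by
    by_cases hj : j = i <;> simp [y, hj]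
  refine measure_mono_null (t := univ.pi fun j => Icc 0 (y j)) ?_ ?_
  · rintro x ⟨hx, hxi⟩ j -
    by_cases hj : j = i
    · subst hj; simp [y, hxi]
    · simpa [y, hj] using hx j
  · rw [hμ y hy, ENNReal.ofReal_eq_zero]
    simpa [y] using archCopula_le_apply hg hy i

theorem measure_ofReal_le_pseudoInv (hg : IsGenerator ψ)
    (hμ : ∀ x : Fin d → ℝ, (∀ i, x i ∈ Icc (0 : ℝ) 1) →
      μ (univ.pi fun i => Icc 0 (x i)) = ENNReal.ofReal (archCopula d ψ x))
    {w : Fin d → ℝ} (hw : ∀ i, 0 ≤ w i) :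
    μ {x | (∀ i, x i ∈ Icc (0 : ℝ) 1) ∧ ∀ i, ENNReal.ofReal (w i) ≤ pseudoInv ψ (x i)} =
      ENNReal.ofReal (ψ (∑ i, w i)) := by
  set E := {x : Fin d → ℝ | (∀ i, x i ∈ Icc (0 : ℝ) 1) ∧
    ∀ i, ENNReal.ofReal (w i) ≤ pseudoInv ψ (x i)}
  have hψw : ∀ i, ψ (w i) ∈ Icc (0 : ℝ) 1 := fun i => hg.mem_Icc _ (hw i)
  rw [← archCopula_psi hg hw, ← hμ _ hψw]
  -- up to the null faces `{x i = 0}`, `E` is the box `∏ [0, ψ (w i)]`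
  refine le_antisymm (measure_mono fun x ⟨hx, hxw⟩ i _ =>
    ⟨(hx i).1, le_psi_of_ofReal_le_pseudoInv hg (hx i) (hw i) (hxw i)⟩) ?_
  calc μ (univ.pi fun i => Icc 0 (ψ (w i)))
      ≤ μ (E ∪ ⋃ i, {x | (∀ j, x j ∈ Icc (0 : ℝ) 1) ∧ x i = 0}) := measure_mono fun x hx => ?_
    _ ≤ μ E + μ (⋃ i, {x | (∀ j, x j ∈ Icc (0 : ℝ) 1) ∧ x i = 0}) := measure_union_le _ _
    _ = μ E := by rw [measure_iUnion_null (measure_face_eq_zero hg hμ), add_zero]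
  have hcube : ∀ j, x j ∈ Icc (0 : ℝ) 1 := fun j =>
    ⟨(hx j (mem_univ j)).1, (hx j (mem_univ j)).2.trans (hψw j).2⟩
  by_cases hpos : ∀ j, 0 < x j
  · exact Or.inl ⟨hcube, fun j =>
      (ofReal_le_pseudoInv_iff hg ⟨hpos j, (hcube j).2⟩ (hw j)).2 (hx j (mem_univ j)).2⟩
  · obtain ⟨i, hi⟩ := not_forall.1 hpos
    exact Or.inr (mem_iUnion.2 ⟨i, hcube, le_antisymm (not_lt.1 hi) (hcube i).1⟩)

/-- The law of `(φ(x₁), …, φ(x_d))` under `μ`, restricted to the unit cube. -/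
def pseudoInvLaw (ψ : ℝ → ℝ) (μ : Measure (Fin d → ℝ)) : Measure (Fin d → ℝ≥0∞) :=
  (μ.restrict (univ.pi fun _ => Icc 0 1)).map fun x i => pseudoInvClamp ψ (x i)

theorem pseudoInvLaw_apply (hg : IsGenerator ψ) {S : Set (Fin d → ℝ≥0∞)} (hS : MeasurableSet S) :
    pseudoInvLaw ψ μ S = μ {x | (∀ i, x i ∈ Icc (0 : ℝ) 1) ∧ (fun i => pseudoInv ψ (x i)) ∈ S} := by
  have hΦ : Measurable fun (x : Fin d → ℝ) i => pseudoInvClamp ψ (x i) :=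
    measurable_pi_lambda _ fun i => (measurable_pseudoInvClamp hg).comp (measurable_pi_apply i)
  rw [pseudoInvLaw, Measure.map_apply hΦ hS, Measure.restrict_apply (hΦ hS), inter_comm]
  congr 1
  ext x
  simp only [mem_inter_iff, mem_univ_pi, mem_preimage, mem_ofPred_eq]
  refine and_congr_right fun hx => ?_
  rw [show (fun i => pseudoInvClamp ψ (x i)) = fun i => pseudoInv ψ (x i) from
    funext fun i => pseudoInvClamp_of_mem (hx i)]

theorem isFiniteMeasure_pseudoInvLaw
    (hμ : ∀ x : Fin d → ℝ, (∀ i, x i ∈ Icc (0 : ℝ) 1) →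
      μ (univ.pi fun i => Icc 0 (x i)) = ENNReal.ofReal (archCopula d ψ x)) :
    IsFiniteMeasure (pseudoInvLaw ψ μ) := by
  have : IsFiniteMeasure (μ.restrict (univ.pi fun _ => Icc (0 : ℝ) 1)) :=
    isFiniteMeasure_restrict.2 <| by
      rw [hμ (fun _ => 1) fun _ => ⟨zero_le_one, le_rfl⟩]
      exact ENNReal.ofReal_ne_top
  unfold pseudoInvLaw
  infer_instance

theorem hasAdditiveSurvival_pseudoInvLaw (hg : IsGenerator ψ)
    (hμ : ∀ x : Fin d → ℝ, (∀ i, x i ∈ Icc (0 : ℝ) 1) →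
      μ (univ.pi fun i => Icc 0 (x i)) = ENNReal.ofReal (archCopula d ψ x)) :
    HasAdditiveSurvival ψ (pseudoInvLaw ψ μ) := by
  intro w hw
  have hS : MeasurableSet {z : Fin d → ℝ≥0∞ | ∀ i, ENNReal.ofReal (w i) ≤ z i} := by
    simp only [ofPred_forall]
    exact MeasurableSet.iInter fun i => measurableSet_le measurable_const (measurable_pi_apply i)
  rw [measureReal_def, pseudoInvLaw_apply hg hS]
  simp only [mem_ofPred_eq]
  rw [measure_ofReal_le_pseudoInv hg hμ hw,
    ENNReal.toReal_ofReal (hg.mem_Icc _ (Finset.sum_nonneg fun i _ => hw i)).1]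

theorem kendallDF_eq_pseudoInvLaw (hg : IsGenerator ψ) {t : ℝ} (ht : t ∈ Icc (0 : ℝ) 1) :
    kendallDF d ψ μ t = (pseudoInvLaw ψ μ).real {z | pseudoInv ψ t ≤ ∑ i, z i} := by
  have hS : MeasurableSet {z : Fin d → ℝ≥0∞ | pseudoInv ψ t ≤ ∑ i, z i} :=
    measurableSet_le measurable_const (Finset.measurable_sum _ fun i _ => measurable_pi_apply i)
  rw [kendallDF, measureReal_def, pseudoInvLaw_apply hg hS]
  congr 2
  ext x
  exact and_congr_right fun hx => (pseudoInv_le_iff hg ht).symm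

theorem iterate_deriv_eq_zero_of_forall_ge {f : ℝ → ℝ} {a : ℝ} (hf : ∀ z, a ≤ z → f z = 0) {j : ℕ}
    (hdiff : ∀ k < j, DifferentiableAt ℝ (deriv^[k] f) a) : deriv^[j] f a = 0 := by
  suffices ∀ k ≤ j, ∀ z, a ≤ z → deriv^[k] f z = 0 from this j le_rfl a le_rfl
  intro k
  induction k with
  | zero => exact fun _ => hf
  | succ k ih =>
    intro hk z hz
    have hzero := ih (by omega)
    rw [Function.iterate_succ_apply']
    rcases hz.eq_or_lt with rfl | hz
    · exact (uniqueDiffWithinAt_Ici a).eq_deriv _ (hdiff k (by omega)).hasDerivAt.hasDerivWithinAt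
        ((hasDerivWithinAt_const a _ 0).congr hzero (hzero a le_rfl))
    · rw [(Filter.eventuallyEq_of_mem (Ioi_mem_nhds hz) fun y hy => hzero y (le_of_lt hy)).deriv_eq]
      exact deriv_const z 0

end Copula

end ArchimedeanCopula

open ArchimedeanCopula

theorem archCopula_kendall_formula_general
    (d : ℕ) (hd : 3 ≤ d) (ψ : ℝ → ℝ) (hψ : IsdMonotoneGenerator d ψ)
    (μ : Measure (Fin d → ℝ))
    (hμ : ∀ x : Fin d → ℝ, (∀ i, x i ∈ Icc (0 : ℝ) 1) →
      μ (Set.univ.pi fun i => Icc 0 (x i)) = ENNReal.ofReal (archCopula d ψ x)) :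
    (∀ t ∈ Ioo (0 : ℝ) 1,
      kendallDF d ψ μ t =
        leftDeriv (deriv^[d - 2] ψ) (pseudoInv ψ t).toReal *
            ((-1 : ℝ) ^ (d - 1) / (Nat.factorial (d - 1))) *
            (pseudoInv ψ t).toReal ^ (d - 1) +
          ∑ k ∈ Finset.range (d - 1),
            deriv^[k] ψ (pseudoInv ψ t).toReal *
              ((-1 : ℝ) ^ k / (Nat.factorial k)) * (pseudoInv ψ t).toReal ^ k) ∧
    (IsStrictGenerator ψ → kendallDF d ψ μ 0 = 0) ∧
    (pseudoInv ψ 0 ≠ ∞ →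
      kendallDF d ψ μ 0 =
        leftDeriv (deriv^[d - 2] ψ) (pseudoInv ψ 0).toReal *
          ((-1 : ℝ) ^ (d - 1) / (Nat.factorial (d - 1))) *
          (pseudoInv ψ 0).toReal ^ (d - 1)) := by
  have hg := hψ.toIsGenerator
  have := isFiniteMeasure_pseudoInvLaw hμ
  have hν := hasAdditiveSurvival_pseudoInvLaw hg hμ
  have hdiff : ∀ k < d - 2, DifferentiableOn ℝ (deriv^[k] ψ) (Ioi 0) := fun k hk z hz =>
    (hψ.differentiable k hk z hz).differentiableWithinAt
  have hformula := fun {s : ℝ} (hs : 0 < s) =>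
    hν.measureReal_ofReal_le_sum (by omega) hdiff hψ.convexOn hs
  refine ⟨fun t ht => ?_, fun hstrict => ?_, fun h0 => ?_⟩
  · have htop := pseudoInv_ne_top hg ⟨ht.1, ht.2.le⟩
    rw [kendallDF_eq_pseudoInvLaw hg ⟨ht.1.le, ht.2.le⟩, ← ENNReal.ofReal_toReal htop,
      hformula (toReal_pseudoInv_pos hg ⟨ht.1.le, ht.2⟩ htop),
      ENNReal.toReal_ofReal ENNReal.toReal_nonneg]
  · rw [kendallDF_eq_pseudoInvLaw hg ⟨le_rfl, zero_le_one⟩,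
      pseudoInv_zero_of_isStrictGenerator hg hstrict, hν.measureReal_top_le_sum hg.tendsto_atTop]
  · have hs := toReal_pseudoInv_pos hg ⟨le_rfl, zero_lt_one⟩ h0
    have hvanish : ∀ k < d - 1, deriv^[k] ψ (pseudoInv ψ 0).toReal = 0 := fun k hk =>
      iterate_deriv_eq_zero_of_forall_ge (fun _ => psi_eq_zero_of_toReal_pseudoInv_zero_le hg h0)
        fun k' hk' => hψ.differentiable k' (by omega) _ hs
    rw [kendallDF_eq_pseudoInvLaw hg ⟨le_rfl, zero_le_one⟩, ← ENNReal.ofReal_toReal h0,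
      hformula hs, ENNReal.toReal_ofReal ENNReal.toReal_nonneg,
      Finset.sum_eq_zero fun k hk => by rw [hvanish k (Finset.mem_range.1 hk), zero_mul, zero_mul],
      add_zero]

/-- For a `d`-monotone generator `ψ` with copula `C = C_ψ`, for every
`t ∈ (0,1)`:
`F_K^d(t) = D⁻ψ^(d-2)(φ(t)) · ((-1)^(d-1)/(d-1)!) · φ(t)^(d-1)
            + ∑_{k=0}^{d-2} ψ^(k)(φ(t)) · ((-1)^k/k!) · φ(t)^k`.
Moreover `F_K^d(0) = 0` if `ψ` is strict, and
`F_K^d(0) = D⁻ψ^(d-2)(φ(0)) · ((-1)^(d-1)/(d-1)!) · φ(0)^(d-1)` otherwise. -/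
theorem archCopula_kendall_formula
    (d : ℕ) (hd : 3 ≤ d) (ψ : ℝ → ℝ) (hψ : IsdMonotoneGenerator d ψ)
    (μ : Measure (Fin d → ℝ)) (hprob : IsProbabilityMeasure μ)
    (hμ : ∀ x : Fin d → ℝ, (∀ i, x i ∈ Icc (0 : ℝ) 1) →
      μ (Set.univ.pi fun i => Icc 0 (x i)) = ENNReal.ofReal (archCopula d ψ x)) :
    (∀ t ∈ Ioo (0 : ℝ) 1,
      kendallDF d ψ μ t =
        leftDeriv (deriv^[d - 2] ψ) (pseudoInv ψ t).toReal *
            ((-1 : ℝ) ^ (d - 1) / (Nat.factorial (d - 1))) *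
            (pseudoInv ψ t).toReal ^ (d - 1) +
          ∑ k ∈ Finset.range (d - 1),
            deriv^[k] ψ (pseudoInv ψ t).toReal *
              ((-1 : ℝ) ^ k / (Nat.factorial k)) * (pseudoInv ψ t).toReal ^ k) ∧
    (IsStrictGenerator ψ → kendallDF d ψ μ 0 = 0) ∧
    (pseudoInv ψ 0 ≠ ∞ →
      kendallDF d ψ μ 0 =
        leftDeriv (deriv^[d - 2] ψ) (pseudoInv ψ 0).toReal *
          ((-1 : ℝ) ^ (d - 1) / (Nat.factorial (d - 1))) *
          (pseudoInv ψ 0).toReal ^ (d - 1)) :=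
  archCopula_kendall_formula_general d hd ψ hψ μ hμ
end
end

section
/- Let ψ, ψ_1, ψ_2, … be Archimedean generators with pseudo-inverses φ, φ_1, φ_2, …. Then (φ_n)_{n∈ℕ} converges pointwise to φ on (0,1] if and only if (ψ_n)_{n∈ℕ} converges to ψ uniformly on [0,∞). -/
open MeasureTheory Set Filter Topology
open scoped ENNReal NNReal Classical

noncomputable section

/-! Both directions rest on the Galois-type correspondence `y ≤ ψ x ↔ x ≤ φ(y)` for
`y ∈ (0,1]`, `x ≥ 0`. Pointwise convergence of the generators then gives convergence of
the pseudo-inverses in the order topology of `[0,∞]`. Conversely, convergence of `φₙ` on the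
grid `j/k` eventually gives `φₙ((j+1)/k) < φ(j/k)` and `φ((j+1)/k) < φₙ(j/k)`; translated
back through the correspondence, `ψₙ` and `ψ` then never lie more than two grid steps apart. -/

lemma sub_lt_two_div_of_grid {a b : ℝ} {k : ℕ} (hk : 0 < k) (ha : a ≤ 1) (hb : 0 ≤ b)
    (h : ∀ j : ℕ, 0 < j → j < k → ((j : ℝ) + 1) / k ≤ a → (j : ℝ) / k ≤ b) :
    a - b < 2 / k := by
  have hk' : (0 : ℝ) < k := Nat.cast_pos.2 hk
  rw [lt_div_iff₀ hk']
  set m := ⌊a * k⌋₊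
  have ham : a * k < m + 1 := Nat.lt_floor_add_one _
  rcases le_or_gt m 1 with hm | hm
  · have : (m : ℝ) ≤ 1 := by exact_mod_cast hm
    nlinarith
  · have hma : (m : ℝ) ≤ a * k :=
      Nat.floor_le (Nat.pos_of_floor_pos (by omega : 0 < m)).le
    have hmk : m ≤ k := by exact_mod_cast hma.trans (by nlinarith : a * k ≤ k)
    have hjm : ((m - 1 : ℕ) : ℝ) + 1 = m := by
      rw [Nat.cast_sub (by omega : 1 ≤ m)]; ring
    have hb' := h (m - 1) (by omega) (by omega) (by rw [hjm, div_le_iff₀ hk']; exact hma)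
    rw [div_le_iff₀ hk'] at hb'
    linarith

namespace IsGenerator

variable {ψ f g : ℝ → ℝ} {a b x y y' : ℝ}

lemma psiExt_of_ne_top {z : ℝ≥0∞} (hz : z ≠ ∞) : psiExt ψ z = ψ z.toReal := if_neg hz

lemma exists_apply_eq (hψ : IsGenerator ψ) (hy : y ∈ Ioc 0 1) : ∃ r, 0 ≤ r ∧ ψ r = y := by
  obtain ⟨z, hz0, hzy⟩ := ((eventually_ge_atTop 0).and
    (hψ.tendsto_atTop.eventually_lt_const hy.1)).exists
  obtain ⟨r, hr, hry⟩ := intermediate_value_Icc' hz0 (hψ.continuousOn.mono Icc_subset_Ici_self)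
    ⟨hzy.le, hψ.map_zero ▸ hy.2⟩
  exact ⟨r, hr.1, hry⟩

/-- Past the first zero of `ψ` the strict decrease in the definition is not available,
but there `ψ` vanishes. -/
lemma apply_lt_apply (hψ : IsGenerator ψ) (ha : 0 ≤ a) (hab : a < b) (hb : 0 < ψ b) :
    ψ b < ψ a := by
  by_cases hbφ : ENNReal.ofReal b ≤ pseudoInv ψ 0
  · exact hψ.strictAnti ha hab hbφ
  obtain ⟨s, hs, hsb⟩ := sInf_lt_iff.1 (not_le.1 hbφ)
  have hs_top : s ≠ ∞ := ne_top_of_lt hsb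
  have hsψ : ψ s.toReal = 0 := (psiExt_of_ne_top hs_top).symm.trans hs
  have hsb' : s.toReal ≤ b := (ENNReal.toReal_le_of_le_ofReal (ha.trans hab.le) hsb.le)
  have := hψ.antitoneOn ENNReal.toReal_nonneg (ha.trans hab.le) hsb'
  linarith

lemma pseudoInv_le_ofReal (hr : 0 ≤ x) (hψx : ψ x = y) : pseudoInv ψ y ≤ ENNReal.ofReal x :=
  sInf_le <| by
    simp only [mem_ofPred_eq, psiExt_of_ne_top ENNReal.ofReal_ne_top, ENNReal.toReal_ofReal hr,
      hψx]

lemma le_apply_iff (hψ : IsGenerator ψ) (hy : y ∈ Ioc 0 1) (hx : 0 ≤ x) :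
    y ≤ ψ x ↔ ENNReal.ofReal x ≤ pseudoInv ψ y := by
  constructor
  · refine fun hyx => le_sInf fun z (hz : psiExt ψ z = y) => ?_
    rcases eq_or_ne z ∞ with rfl | hz_top
    · exact le_top
    rw [psiExt_of_ne_top hz_top] at hz
    rw [← ENNReal.ofReal_toReal hz_top, ENNReal.ofReal_le_ofReal_iff ENNReal.toReal_nonneg]
    by_contra! hzx
    have := hψ.apply_lt_apply ENNReal.toReal_nonneg hzx (hy.1.trans_le hyx)
    linarith
  · intro hxφ
    obtain ⟨r, hr, hψr⟩ := hψ.exists_apply_eq hy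
    have hxr : x ≤ r := (ENNReal.ofReal_le_ofReal_iff hr).1 (hxφ.trans (pseudoInv_le_ofReal hr hψr))
    exact hψr ▸ hψ.antitoneOn hx hr hxr

lemma lt_apply_of_ofReal_lt_pseudoInv (hψ : IsGenerator ψ) (hy : y ∈ Ioc 0 1) (hx : 0 ≤ x)
    (hxφ : ENNReal.ofReal x < pseudoInv ψ y) : y < ψ x := by
  obtain ⟨x', hx', hxx', hx'φ⟩ := ENNReal.lt_iff_exists_real_btwn.1 hxφ
  have hyx' : y ≤ ψ x' := (hψ.le_apply_iff hy hx').2 hx'φ.le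
  exact hyx'.trans_lt <| hψ.apply_lt_apply hx ((ENNReal.ofReal_lt_ofReal_iff_of_nonneg hx).1 hxx')
    (hy.1.trans_le hyx')

lemma pseudoInv_strictAntiOn (hψ : IsGenerator ψ) : StrictAntiOn (pseudoInv ψ) (Ioc 0 1) := by
  intro y' hy' y hy hlt
  obtain ⟨r, hr, hψr⟩ := hψ.exists_apply_eq hy'
  calc pseudoInv ψ y < ENNReal.ofReal r := not_le.1 fun h => by
        linarith [(hψ.le_apply_iff hy hr).2 h]
    _ ≤ pseudoInv ψ y' := (hψ.le_apply_iff hy' hr).1 hψr.ge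

lemma le_apply_of_pseudoInv_lt (hf : IsGenerator f) (hg : IsGenerator g) (hy : y ∈ Ioc 0 1)
    (hy' : y' ∈ Ioc 0 1) (hφ : pseudoInv f y < pseudoInv g y') (hx : 0 ≤ x) (hfx : y ≤ f x) :
    y' ≤ g x :=
  (hg.le_apply_iff hy' hx).2 <| ((hf.le_apply_iff hy hx).1 hfx).trans hφ.le

end IsGenerator

open IsGenerator

section

variable {ι : Type*} {l : Filter ι} {ψ : ℝ → ℝ} {Ψ : ι → ℝ → ℝ}

lemma tendsto_pseudoInv_of_tendsto (hψ : IsGenerator ψ) (hΨ : ∀ i, IsGenerator (Ψ i))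
    (h : ∀ x, 0 ≤ x → Tendsto (fun i => Ψ i x) l (𝓝 (ψ x))) {y : ℝ} (hy : y ∈ Ioc 0 1) :
    Tendsto (fun i => pseudoInv (Ψ i) y) l (𝓝 (pseudoInv ψ y)) := by
  refine tendsto_order.2 ⟨fun a ha => ?_, fun a ha => ?_⟩
  · obtain ⟨x, hx, hax, hxφ⟩ := ENNReal.lt_iff_exists_real_btwn.1 ha
    filter_upwards [(h x hx).eventually_const_lt (hψ.lt_apply_of_ofReal_lt_pseudoInv hy hx hxφ)]
      with i hi
    exact hax.trans_le (((hΨ i).le_apply_iff hy hx).1 hi.le)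
  · obtain ⟨x, hx, hφx, hxa⟩ := ENNReal.lt_iff_exists_real_btwn.1 ha
    have hψx : ψ x < y := not_le.1 (mt (hψ.le_apply_iff hy hx).1 hφx.not_ge)
    filter_upwards [(h x hx).eventually_lt_const hψx] with i hi
    exact (not_le.1 (mt ((hΨ i).le_apply_iff hy hx).2 hi.not_ge)).trans hxa

lemma eventually_le_apply_of_tendsto_pseudoInv (hψ : IsGenerator ψ)
    (hΨ : ∀ i, IsGenerator (Ψ i)) {y' y : ℝ} (hy' : y' ∈ Ioc 0 1) (hy : y ∈ Ioc 0 1)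
    (hlt : y' < y) (h' : Tendsto (fun i => pseudoInv (Ψ i) y') l (𝓝 (pseudoInv ψ y')))
    (h : Tendsto (fun i => pseudoInv (Ψ i) y) l (𝓝 (pseudoInv ψ y))) :
    ∀ᶠ i in l, ∀ x, 0 ≤ x → (y ≤ Ψ i x → y' ≤ ψ x) ∧ (y ≤ ψ x → y' ≤ Ψ i x) := by
  have hφ := hψ.pseudoInv_strictAntiOn hy' hy hlt
  filter_upwards [h.eventually_lt_const hφ, h'.eventually_const_lt hφ] with i hi hi' x hx
  exact ⟨le_apply_of_pseudoInv_lt (hΨ i) hψ hy hy' hi hx,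
    le_apply_of_pseudoInv_lt hψ (hΨ i) hy hy' hi' hx⟩

lemma tendstoUniformlyOn_of_tendsto_pseudoInv (hψ : IsGenerator ψ)
    (hΨ : ∀ i, IsGenerator (Ψ i))
    (h : ∀ y ∈ Ioc (0 : ℝ) 1, Tendsto (fun i => pseudoInv (Ψ i) y) l (𝓝 (pseudoInv ψ y))) :
    TendstoUniformlyOn Ψ ψ l (Ici 0) := by
  rw [Metric.tendstoUniformlyOn_iff]
  intro ε hε
  obtain ⟨k, hk⟩ := exists_nat_gt (2 / ε)
  have hk0 : 0 < k := by exact_mod_cast (div_pos two_pos hε).trans hk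
  have hk' : (0 : ℝ) < k := Nat.cast_pos.2 hk0
  have hkε : 2 / (k : ℝ) < ε := by rw [div_lt_iff₀ hε] at hk; rw [div_lt_iff₀ hk']; linarith
  have hgrid : ∀ j ∈ Finset.Ioo 0 k, ∀ᶠ i in l, ∀ x, 0 ≤ x →
      (((j : ℝ) + 1) / k ≤ Ψ i x → (j : ℝ) / k ≤ ψ x) ∧
        (((j : ℝ) + 1) / k ≤ ψ x → (j : ℝ) / k ≤ Ψ i x) := by
    intro j hj
    obtain ⟨hj0, hjk⟩ := Finset.mem_Ioo.1 hj
    have hj0' : (0 : ℝ) < j := Nat.cast_pos.2 hj0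
    have hjk' : (j : ℝ) + 1 ≤ k := by exact_mod_cast hjk
    have hy' : (j : ℝ) / k ∈ Ioc 0 1 := ⟨by positivity, (div_le_one hk').2 (by linarith)⟩
    have hy : ((j : ℝ) + 1) / k ∈ Ioc 0 1 := ⟨by positivity, (div_le_one hk').2 hjk'⟩
    exact eventually_le_apply_of_tendsto_pseudoInv hψ hΨ hy' hy
      (div_lt_div_of_pos_right (lt_add_one _) hk') (h _ hy') (h _ hy)
  filter_upwards [(eventually_all_finset _).2 hgrid] with i hi x (hx : 0 ≤ x)
  have hlev := fun j (hj0 : 0 < j) (hjk : j < k) => hi j (Finset.mem_Ioo.2 ⟨hj0, hjk⟩) x hx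
  rw [Real.dist_eq, abs_sub_lt_iff]
  exact ⟨(sub_lt_two_div_of_grid hk0 (hψ.mem_Icc x hx).2 ((hΨ i).mem_Icc x hx).1
      fun j hj0 hjk => (hlev j hj0 hjk).2).trans hkε,
    (sub_lt_two_div_of_grid hk0 ((hΨ i).mem_Icc x hx).2 (hψ.mem_Icc x hx).1
      fun j hj0 hjk => (hlev j hj0 hjk).1).trans hkε⟩

end

/-- For Archimedean generators `ψ, ψ₁, ψ₂, …` with pseudo-inverses
`φ, φ₁, φ₂, …`, the sequence `(φₙ)` converges pointwise to `φ` on `(0,1]` if and only if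
`(ψₙ)` converges to `ψ` uniformly on `[0,∞)`. -/
theorem pseudoInv_conv_iff_generator_uniform_conv
    (ψ : ℝ → ℝ) (Ψ : ℕ → ℝ → ℝ)
    (hψ : IsGenerator ψ) (hΨ : ∀ n, IsGenerator (Ψ n)) :
    (∀ y ∈ Ioc (0 : ℝ) 1,
        Tendsto (fun n => pseudoInv (Ψ n) y) atTop (𝓝 (pseudoInv ψ y))) ↔
      TendstoUniformlyOn (fun n => Ψ n) ψ atTop (Ici 0) :=
  ⟨tendstoUniformlyOn_of_tendsto_pseudoInv hψ hΨ, fun hU _ hy =>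
    tendsto_pseudoInv_of_tendsto hψ hΨ (fun _ hx => hU.tendsto_at hx) hy⟩
end
end

section
/- Let d ≥ 3, let ψ be a d-monotone Archimedean generator and let γ be its Williamson measure, i.e. the unique Borel probability measure on [0,∞) with γ({0}) = 0 and ψ = W_d γ on (0,∞). Then for every z > 0: γ([0,z]) = ∑_{k=0}^{d−2} ((−1)^k ψ^{(k)}(1/z) / k!) · z^{−k} + ((−1)^{d−1} D^−ψ^{(d−2)}(1/z) / (d−1)!) · z^{−(d−1)}, where ψ^{(0)} := ψ and D^−ψ^{(d−2)} denotes the left-hand derivative of ψ^{(d−2)}. -/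
open MeasureTheory Set Filter Topology
open scoped ENNReal NNReal Classical

noncomputable section

/-- The Williamson transform `(W_d γ)(z) = ∫ (1 - tz)₊^(d-1) dγ(t)`. -/
def williamson (d : ℕ) (γ : Measure ℝ) (z : ℝ) : ℝ :=
  ∫ t, max (1 - t * z) 0 ^ (d - 1) ∂γ

/-- The class `P_{W_d}`: Borel probability measures on `[0,∞)` with `γ({0}) = 0` and
`∫_{[0,1]} (1-t)^(d-1) dγ(t) = 1/2`. -/
def memPW (d : ℕ) (γ : Measure ℝ) : Prop :=
  IsProbabilityMeasure γ ∧ γ (Iio 0) = 0 ∧ γ {0} = 0 ∧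
    ∫ t in Icc (0 : ℝ) 1, (1 - t) ^ (d - 1) ∂γ = 1 / 2

/-!
Write `M_{k,m}(x) = ∫ tᵏ (1 - t x)₊ᵐ dγ(t)`, so that `ψ = M_{0,d-1}` on `(0,∞)`.
Differentiating under the integral sign gives `M_{k,m}' = -m M_{k+1,m-1}` for `m ≥ 2`, hence
`ψ⁽ᵏ⁾ = (-1)ᵏ (d-1)!/(d-1-k)! M_{k,d-1-k}` for `k ≤ d-2`; for `m = 1` the kink of
`(1 - t x)₊` at `t = 1/x` leaves only a left derivative,
`D⁻M_{k,1}(x) = -∫_{[0,1/x]} t^{k+1} dγ`.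
Integrating `1 = (t x + (1 - t x))^{d-1}` over `[0, 1/x]` against `γ` and expanding binomially
expresses `γ([0, 1/x])` through exactly these quantities.
-/

lemma hasDerivAt_max_zero_pow {m : ℕ} (hm : 2 ≤ m) (a : ℝ) :
    HasDerivAt (fun a : ℝ => max a 0 ^ m) (m * max a 0 ^ (m - 1)) a := by
  refine hasDerivAt_of_hasDerivAt_of_ne' (f := fun a : ℝ => max a 0 ^ m)
    (g := fun a : ℝ => m * max a 0 ^ (m - 1)) (x := 0) (fun b hb => ?_) (by fun_prop)
    (by fun_prop) a
  rcases hb.lt_or_gt with hb | hb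
  · have hzero : (fun a : ℝ => max a 0 ^ m) =ᶠ[𝓝 b] fun _ => 0 := by
      filter_upwards [Iio_mem_nhds hb] with a ha
      rw [max_eq_right (le_of_lt ha), zero_pow (by omega)]
    rw [max_eq_right hb.le, zero_pow (by omega), mul_zero]
    exact (hasDerivAt_const b 0).congr_of_eventuallyEq hzero
  · have hpow : (fun a : ℝ => max a 0 ^ m) =ᶠ[𝓝 b] fun a => a ^ m := by
      filter_upwards [Ioi_mem_nhds hb] with a ha
      rw [max_eq_left ha.le]
    rw [max_eq_left hb.le]
    exact (hasDerivAt_pow m b).congr_of_eventuallyEq hpow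

lemma hasDerivAt_pow_mul_max_one_sub_mul_pow (k : ℕ) {m : ℕ} (hm : 2 ≤ m) (t x : ℝ) :
    HasDerivAt (fun y => t ^ k * max (1 - t * y) 0 ^ m)
      (-m * (t ^ (k + 1) * max (1 - t * x) 0 ^ (m - 1))) x := by
  have hlin : HasDerivAt (fun y => 1 - t * y) (-t) x := by
    simpa using ((hasDerivAt_id x).const_mul t).const_sub 1
  refine (((hasDerivAt_max_zero_pow hm _).comp x hlin).const_mul (t ^ k)).congr_deriv ?_
  ring

lemma pow_mul_max_one_sub_mul_pow_le (k : ℕ) {m : ℕ} (hm : m ≠ 0) {t x : ℝ} (ht : 0 ≤ t)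
    (hx : 0 < x) : t ^ k * max (1 - t * x) 0 ^ m ≤ x⁻¹ ^ k := by
  rcases le_or_gt (t * x) 1 with htx | htx
  · have hle : t ≤ x⁻¹ := by rwa [← one_div, le_div_iff₀ hx]
    calc t ^ k * max (1 - t * x) 0 ^ m ≤ x⁻¹ ^ k * 1 := by
          gcongr
          exact pow_le_one₀ (le_max_right _ _) (max_le (by nlinarith) zero_le_one)
      _ = x⁻¹ ^ k := mul_one _
  · rw [max_eq_right (by linarith), zero_pow hm, mul_zero]
    positivity

lemma dist_pow_mul_one_sub_mul_le (k : ℕ) {t c : ℝ} (ht : 0 ≤ t) (htc : t ≤ c)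
    (y y' : ℝ) :
    dist (t ^ k * (1 - t * y)) (t ^ k * (1 - t * y')) ≤ c ^ (k + 1) * dist y y' := by
  rw [Real.dist_eq, Real.dist_eq, show t ^ k * (1 - t * y) - t ^ k * (1 - t * y') =
    t ^ (k + 1) * (y' - y) by ring, abs_mul, abs_of_nonneg (by positivity), abs_sub_comm]
  gcongr

lemma dist_pow_mul_max_one_sub_mul_le (k : ℕ) {t c y y' : ℝ} (ht : 0 ≤ t) (hc : 0 < c)
    (hy : c < y) (hy' : c < y') :
    dist (t ^ k * max (1 - t * y) 0) (t ^ k * max (1 - t * y') 0) ≤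
      c⁻¹ ^ (k + 1) * dist y y' := by
  rcases le_or_gt t c⁻¹ with htc | htc
  · refine le_trans ?_ (dist_pow_mul_one_sub_mul_le k ht htc y y')
    rw [Real.dist_eq, Real.dist_eq, ← mul_sub, ← mul_sub, abs_mul, abs_mul]
    exact mul_le_mul_of_nonneg_left (abs_max_sub_max_le_abs _ _ _) (abs_nonneg _)
  · have hvanish : ∀ z, c < z → max (1 - t * z) 0 = 0 := fun z hz => by
      have : 1 < t * z := by
        calc 1 = c⁻¹ * c := (inv_mul_cancel₀ hc.ne').symm
          _ < t * z := mul_lt_mul htc hz.le hc ht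
      exact max_eq_right (by linarith)
    rw [hvanish y hy, hvanish y' hy', dist_self]
    positivity

lemma mul_le_one_of_mem_Icc_inv {t x y : ℝ} (hx : 0 < x) (ht : t ∈ Icc 0 x⁻¹)
    (hy : y ≤ x) : t * y ≤ 1 := by
  linarith [mul_le_mul_of_nonneg_left hy ht.1, mul_le_mul_of_nonneg_right ht.2 hx.le,
    inv_mul_cancel₀ hx.ne']

lemma one_lt_mul_of_notMem_Icc_inv {t x : ℝ} (hx : 0 < x) (ht : 0 ≤ t)
    (h : t ∉ Icc 0 x⁻¹) : 1 < t * x :=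
  (inv_lt_iff_one_lt_mul₀ hx).mp (lt_of_not_ge fun h' => h ⟨ht, h'⟩)

lemma hasDerivAt_pow_mul_max_one_sub_mul_of_one_lt (k : ℕ) {t x : ℝ} (h : 1 < t * x) :
    HasDerivAt (fun y => t ^ k * max (1 - t * y) 0) 0 x := by
  have hc : ContinuousAt (fun y => 1 - t * y) x := by fun_prop
  refine (hasDerivAt_const x 0).congr_of_eventuallyEq ?_
  filter_upwards [hc.eventually (Iio_mem_nhds (show 1 - t * x < 0 by linarith))] with y hy
  rw [max_eq_right (le_of_lt hy), mul_zero]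

def williamsonMoment (γ : Measure ℝ) (k m : ℕ) (x : ℝ) : ℝ :=
  ∫ t, t ^ k * max (1 - t * x) 0 ^ m ∂γ

section WilliamsonMoment

variable {γ : Measure ℝ} {k m : ℕ} {x : ℝ}

lemma ae_nonneg_of_measure_Iio_zero (hγ : γ (Iio 0) = 0) : ∀ᵐ t ∂γ, 0 ≤ t :=
  measure_eq_zero_iff_ae_notMem.mp hγ |>.mono fun _ ht => not_lt.mp ht

lemma williamsonMoment_eq_setIntegral (hγ : γ (Iio 0) = 0) (hm : m ≠ 0) (hx : 0 < x) :
    williamsonMoment γ k m x = ∫ t in Icc 0 x⁻¹, t ^ k * (1 - t * x) ^ m ∂γ := by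
  rw [williamsonMoment, ← setIntegral_eq_integral_of_ae_compl_eq_zero]
  · refine setIntegral_congr_fun measurableSet_Icc fun t ht => ?_
    simp only [max_eq_left (sub_nonneg.mpr (mul_le_one_of_mem_Icc_inv hx ht le_rfl))]
  · filter_upwards [ae_nonneg_of_measure_Iio_zero hγ] with t ht ht'
    have htx := one_lt_mul_of_notMem_Icc_inv hx ht ht'
    rw [max_eq_right (by linarith), zero_pow hm, mul_zero]

variable [IsFiniteMeasure γ]

lemma integrable_pow_mul_max_one_sub_mul_pow (hγ : γ (Iio 0) = 0) (hm : m ≠ 0) (hx : 0 < x) :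
    Integrable (fun t => t ^ k * max (1 - t * x) 0 ^ m) γ := by
  refine .of_bound (by fun_prop) (x⁻¹ ^ k) ?_
  filter_upwards [ae_nonneg_of_measure_Iio_zero hγ] with t ht
  rw [Real.norm_of_nonneg (by positivity)]
  exact pow_mul_max_one_sub_mul_pow_le k hm ht hx

lemma hasDerivAt_williamsonMoment (hγ : γ (Iio 0) = 0) (hm : 2 ≤ m) (hx : 0 < x) :
    HasDerivAt (williamsonMoment γ k m) (-m * williamsonMoment γ (k + 1) (m - 1) x) x := by
  have hbound : ∀ᵐ t ∂γ, ∀ y ∈ Ioi (x / 2),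
      ‖-m * (t ^ (k + 1) * max (1 - t * y) 0 ^ (m - 1))‖ ≤ m * (x / 2)⁻¹ ^ (k + 1) := by
    filter_upwards [ae_nonneg_of_measure_Iio_zero hγ] with t ht y hy
    have hy0 : 0 < y := (half_pos hx).trans hy
    rw [norm_mul, norm_neg, Real.norm_natCast, Real.norm_of_nonneg (by positivity)]
    gcongr
    exact (pow_mul_max_one_sub_mul_pow_le _ (by omega) ht hy0).trans
      (pow_le_pow_left₀ (by positivity) (inv_anti₀ (half_pos hx) hy.le) _)
  have h := hasDerivAt_integral_of_dominated_loc_of_deriv_le (Ioi_mem_nhds (half_lt_self hx))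
    (.of_forall fun _ => by fun_prop) (integrable_pow_mul_max_one_sub_mul_pow hγ (by omega) hx)
    (by fun_prop) hbound (integrable_const _)
    (.of_forall fun t y _ => hasDerivAt_pow_mul_max_one_sub_mul_pow k hm t y)
  rw [integral_const_mul] at h
  exact h.2

lemma hasDerivWithinAt_williamsonMoment_one (hγ : γ (Iio 0) = 0) (hx : 0 < x) :
    HasDerivWithinAt (williamsonMoment γ k 1) (-∫ t in Icc 0 x⁻¹, t ^ (k + 1) ∂γ)
      (Iic x) x := by
  -- On `y ≤ x` the integrand agrees with one that is differentiable at `x` for every `t`.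
  set G : ℝ → ℝ → ℝ := fun y t =>
    if t ∈ Icc 0 x⁻¹ then t ^ k * (1 - t * y) else t ^ k * max (1 - t * y) 0
  have hG_ae : ∀ y ≤ x, G y =ᵐ[γ] fun t => t ^ k * max (1 - t * y) 0 ^ 1 := by
    intro y hy
    filter_upwards [ae_nonneg_of_measure_Iio_zero hγ] with t ht
    by_cases htx : t ∈ Icc 0 x⁻¹
    · simp only [G, if_pos htx, pow_one,
        max_eq_left (sub_nonneg.mpr (mul_le_one_of_mem_Icc_inv hx htx hy))]
    · simp only [G, if_neg htx, pow_one]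
  have hG_lip : ∀ᵐ t ∂γ,
      LipschitzOnWith (Real.nnabs ((x / 2)⁻¹ ^ (k + 1))) (G · t) (Ioi (x / 2)) := by
    filter_upwards [ae_nonneg_of_measure_Iio_zero hγ] with t ht
    refine .of_dist_le_mul fun y hy y' hy' => ?_
    rw [Real.coe_nnabs, abs_of_nonneg (by positivity)]
    by_cases htx : t ∈ Icc 0 x⁻¹
    · simp only [G, if_pos htx]
      exact dist_pow_mul_one_sub_mul_le k ht
        (htx.2.trans (inv_anti₀ (half_pos hx) (half_le_self hx.le))) y y'
    · simp only [G, if_neg htx]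
      exact dist_pow_mul_max_one_sub_mul_le k ht (half_pos hx) hy hy'
  have hG_diff : ∀ᵐ t ∂γ,
      HasDerivAt (G · t) (-(Icc 0 x⁻¹).indicator (fun t => t ^ (k + 1)) t) x := by
    filter_upwards [ae_nonneg_of_measure_Iio_zero hγ] with t ht
    by_cases htx : t ∈ Icc 0 x⁻¹
    · simp only [G, if_pos htx, indicator_of_mem htx]
      refine (((hasDerivAt_id x).const_mul t).const_sub 1 |>.const_mul (t ^ k)).congr_deriv ?_
      ring
    · simp only [G, if_neg htx, indicator_of_notMem htx, neg_zero]
      exact hasDerivAt_pow_mul_max_one_sub_mul_of_one_lt k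
        (one_lt_mul_of_notMem_Icc_inv hx ht htx)
  have h := hasDerivAt_integral_of_dominated_loc_of_lip (F := G)
    (F' := fun t => -(Icc 0 x⁻¹).indicator (fun t => t ^ (k + 1)) t)
    (Ioi_mem_nhds (half_lt_self hx))
    (.of_forall fun _ =>
      (Measurable.ite measurableSet_Icc (by fun_prop) (by fun_prop)).aestronglyMeasurable)
    ((integrable_pow_mul_max_one_sub_mul_pow hγ one_ne_zero hx).congr (hG_ae x le_rfl).symm)
    ((measurable_id.pow_const _).indicator measurableSet_Icc).neg.aestronglyMeasurable hG_lip
    (integrable_const _) hG_diff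
  rw [integral_neg, integral_indicator measurableSet_Icc] at h
  have hG_eq : ∀ y ≤ x, ∫ t, G y t ∂γ = williamsonMoment γ k 1 y :=
    fun y hy => integral_congr_ae (hG_ae y hy)
  exact h.2.hasDerivWithinAt.congr (fun y hy => (hG_eq y hy).symm) (hG_eq x le_rfl).symm

lemma toReal_measure_Icc_inv_eq_sum (hγ : γ (Iio 0) = 0) (n : ℕ) (hx : 0 < x) :
    (γ (Icc 0 x⁻¹)).toReal =
      ∑ k ∈ Finset.range n, n.choose k * williamsonMoment γ k (n - k) x * x ^ k +
        (∫ t in Icc 0 x⁻¹, t ^ n ∂γ) * x ^ n := by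
  have hterm : ∀ k,
      ∫ t in Icc 0 x⁻¹, (t * x) ^ k * (1 - t * x) ^ (n - k) * n.choose k ∂γ =
        n.choose k * (∫ t in Icc 0 x⁻¹, t ^ k * (1 - t * x) ^ (n - k) ∂γ) * x ^ k := by
    intro k
    rw [← integral_const_mul, ← integral_mul_const]
    congr 1 with t
    ring
  calc (γ (Icc 0 x⁻¹)).toReal = ∫ t in Icc 0 x⁻¹, (t * x + (1 - t * x)) ^ n ∂γ := by
        simp [measureReal_def]
    _ = ∑ k ∈ Finset.range (n + 1),
          ∫ t in Icc 0 x⁻¹, (t * x) ^ k * (1 - t * x) ^ (n - k) * n.choose k ∂γ := by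
        simp_rw [add_pow]
        exact integral_finsetSum _ fun k _ => (by fun_prop : Continuous _).integrableOn_Icc
    _ = _ := by
        rw [Finset.sum_range_succ, hterm, Nat.choose_self, Nat.sub_self]
        congr 1
        · refine Finset.sum_congr rfl fun k hk => ?_
          rw [hterm, williamsonMoment_eq_setIntegral hγ
            (Nat.sub_ne_zero_of_lt (Finset.mem_range.mp hk)) hx]
        · simp

lemma iterate_deriv_eq_williamsonMoment {f : ℝ → ℝ} {n : ℕ} (hγ : γ (Iio 0) = 0)
    (hf : ∀ x, 0 < x → f x = williamsonMoment γ 0 n x) {k : ℕ} (hk : k < n) (hx : 0 < x) :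
    deriv^[k] f x = (-1) ^ k * n.descFactorial k * williamsonMoment γ k (n - k) x := by
  induction k generalizing x with
  | zero => simp [hf x hx]
  | succ k ih =>
    have hev : deriv^[k] f =ᶠ[𝓝 x]
        fun y => (-1) ^ k * n.descFactorial k * williamsonMoment γ k (n - k) y :=
      eventually_of_mem (Ioi_mem_nhds hx) fun y hy => ih (by omega) hy
    rw [Function.iterate_succ_apply', hev.deriv_eq,
      ((hasDerivAt_williamsonMoment hγ (by omega) hx).const_mul _).deriv, Nat.descFactorial_succ,
      Nat.sub_sub, Nat.cast_mul]
    ring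

lemma leftDeriv_iterate_deriv_eq_setIntegral {f : ℝ → ℝ} {n : ℕ} (hγ : γ (Iio 0) = 0)
    (hf : ∀ x, 0 < x → f x = williamsonMoment γ 0 (n + 1) x) (hx : 0 < x) :
    leftDeriv (deriv^[n] f) x =
      (-1) ^ (n + 1) * (n + 1).factorial * ∫ t in Icc 0 x⁻¹, t ^ (n + 1) ∂γ := by
  have hev : deriv^[n] f =ᶠ[𝓝 x]
      fun y => (-1) ^ n * (n + 1).descFactorial n * williamsonMoment γ n 1 y :=
    eventually_of_mem (Ioi_mem_nhds hx) fun y hy => by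
      rw [iterate_deriv_eq_williamsonMoment hγ hf (Nat.lt_succ_self n) hy, Nat.add_sub_cancel_left]
  have hD := ((hasDerivWithinAt_williamsonMoment_one (k := n) hγ hx).const_mul
    ((-1) ^ n * ((n + 1).descFactorial n : ℝ))).mono Iio_subset_Iic_self
  rw [leftDeriv, (hD.congr_of_eventuallyEq (hev.filter_mono nhdsWithin_le_nhds)
    hev.self_of_nhds).derivWithin (uniqueDiffWithinAt_Iio x), ← Nat.descFactorial_self,
    Nat.descFactorial_succ, Nat.add_sub_cancel_left, one_mul]
  ring

end WilliamsonMoment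

theorem williamson_measure_cdf_general
    (d : ℕ) (hd : 3 ≤ d) (ψ : ℝ → ℝ)
    (γ : Measure ℝ) (hprob : IsProbabilityMeasure γ)
    (hneg : γ (Iio 0) = 0)
    (hW : ∀ z : ℝ, 0 < z → ψ z = williamson d γ z) :
    ∀ z : ℝ, 0 < z →
      (γ (Icc 0 z)).toReal =
        (∑ k ∈ Finset.range (d - 1),
          (-1 : ℝ) ^ k * deriv^[k] ψ (1 / z) / (Nat.factorial k) * (1 / z) ^ k) +
        (-1 : ℝ) ^ (d - 1) * leftDeriv (deriv^[d - 2] ψ) (1 / z) /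
          (Nat.factorial (d - 1)) * (1 / z) ^ (d - 1) := by
  intro z hz
  obtain ⟨n, rfl⟩ : ∃ n, d = n + 2 := ⟨d - 2, by omega⟩
  have hψ : ∀ x, 0 < x → ψ x = williamsonMoment γ 0 (n + 1) x := fun x hx => by
    simp [hW x hx, williamson, williamsonMoment]
  have hx : 0 < 1 / z := by positivity
  have hsign : ∀ j : ℕ, (-1 : ℝ) ^ j * (-1) ^ j = 1 := fun j => by rw [← mul_pow]; norm_num
  have hcdf := toReal_measure_Icc_inv_eq_sum hneg (n + 1) hx
  rw [inv_div, div_one] at hcdf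
  rw [show n + 2 - 1 = n + 1 by omega, show n + 2 - 2 = n by omega, hcdf,
    leftDeriv_iterate_deriv_eq_setIntegral hneg hψ hx]
  congr 1
  · refine Finset.sum_congr rfl fun k hk => ?_
    rw [iterate_deriv_eq_williamsonMoment hneg hψ (Finset.mem_range.mp hk) hx,
      Nat.descFactorial_eq_factorial_mul_choose, Nat.cast_mul]
    field_simp
    linear_combination -((n + 1).choose k * williamsonMoment γ k (n + 1 - k) (1 / z)) * hsign k
  · field_simp
    linear_combination -(∫ t in Icc 0 z, t ^ (n + 1) ∂γ) * hsign (n + 1)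

/-- If `ψ` is a `d`-monotone generator with Williamson measure `γ`,
then for every `z > 0`:
`γ([0,z]) = ∑_{k=0}^{d-2} ((-1)^k ψ^(k)(1/z)/k!) z^{-k}
            + ((-1)^(d-1) D⁻ψ^(d-2)(1/z)/(d-1)!) z^{-(d-1)}`. -/
theorem williamson_measure_cdf
    (d : ℕ) (hd : 3 ≤ d) (ψ : ℝ → ℝ) (hψ : IsdMonotoneGenerator d ψ)
    (γ : Measure ℝ) (hprob : IsProbabilityMeasure γ)
    (hneg : γ (Iio 0) = 0) (h0 : γ {0} = 0)
    (hW : ∀ z : ℝ, 0 < z → ψ z = williamson d γ z) :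
    ∀ z : ℝ, 0 < z →
      (γ (Icc 0 z)).toReal =
        (∑ k ∈ Finset.range (d - 1),
          (-1 : ℝ) ^ k * deriv^[k] ψ (1 / z) / (Nat.factorial k) * (1 / z) ^ k) +
        (-1 : ℝ) ^ (d - 1) * leftDeriv (deriv^[d - 2] ψ) (1 / z) /
          (Nat.factorial (d - 1)) * (1 / z) ^ (d - 1) :=
  williamson_measure_cdf_general d hd ψ γ hprob hneg hW
end
end

section
/- Let m ≥ 1 and let μ be a Borel probability measure on [0,1]^m × [0,1] whose first marginal ν (the pushforward of μ under the projection onto [0,1]^m) is absolutely continuous with respect to Lebesgue measure λ_m on [0,1]^m. Let (K(x,·))_{x ∈ [0,1]^m} be a disintegration of μ with respect to ν, i.e. a Markov kernel from [0,1]^m to [0,1] with μ(A × B) = ∫_A K(x,B) dν(x) for all Borel sets A ⊆ [0,1]^m and B ⊆ [0,1]. Then μ is singular with respect to Lebesgue measure λ_{m+1} on [0,1]^m × [0,1] if and only if there exists a Borel set Λ ⊆ [0,1]^m with ν(Λ) = 1 such that for every x ∈ Λ the probability measure K(x,·) is singular with respect to Lebesgue measure λ on [0,1]. -/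
/-!
Disintegrating `μ = ν ⊗ₘ K` and writing Lebesgue measure on the product as `λ_m ⊗ₘ const λ`,
the question becomes when `ν ⊗ₘ K ⟂ₘ λ_m ⊗ₘ const λ`. Since `ν ≪ λ_m`, the part of `λ_m` singular
to `ν` is irrelevant and one may compare with `ν ⊗ₘ const λ` instead; two composition products
over the same base are singular exactly when their kernels are pointwise singular `ν`-a.e.
That last criterion needs a finite second kernel, so `λ` is replaced by the equivalent finite
measure `λ.toFinite`.
-/

open MeasureTheory Set ProbabilityTheory

namespace MeasureTheory

variable {α β : Type*} [MeasurableSpace α] [MeasurableSpace β]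

theorem ae_iff_exists_measurableSet_measure_eq_one {ν : Measure α} [IsProbabilityMeasure ν]
    {p : α → Prop} : (∀ᵐ x ∂ν, p x) ↔ ∃ s, MeasurableSet s ∧ ν s = 1 ∧ ∀ x ∈ s, p x := by
  constructor
  · intro h
    refine ⟨(toMeasurable ν {x | ¬p x})ᶜ, (measurableSet_toMeasurable _ _).compl, ?_, ?_⟩
    · rw [prob_compl_eq_one_iff (measurableSet_toMeasurable _ _), measure_toMeasurable]
      exact ae_iff.mp h
    · intro x hx
      by_contra hpx
      exact hx (subset_toMeasurable _ _ hpx)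
  · rintro ⟨s, hs, hνs, hps⟩
    filter_upwards [ae_iff.mpr ((prob_compl_eq_zero_iff hs).mpr hνs)] with x hx
    exact hps x (by simpa using hx)

namespace Measure

theorem eq_compProd_of_forall_prod {μ : Measure (α × β)} [IsFiniteMeasure μ] {κ : Kernel α β}
    [IsSFiniteKernel κ]
    (h : ∀ (A : Set α) (B : Set β), MeasurableSet A → MeasurableSet B →
      μ (A ×ˢ B) = ∫⁻ x in A, κ x B ∂μ.fst) :
    μ = μ.fst ⊗ₘ κ :=
  ext_prod fun hA hB => (h _ _ hA hB).trans (compProd_apply_prod hA hB).symm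

theorem mutuallySingular_toFinite_iff {μ ν : Measure α} [SFinite ν] :
    μ ⟂ₘ ν.toFinite ↔ μ ⟂ₘ ν :=
  ⟨fun h => h.mono_ac .rfl (absolutelyContinuous_toFinite ν),
    fun h => h.mono_ac .rfl (toFinite_absolutelyContinuous ν)⟩

theorem compProd_mutuallySingular_prod_iff [MeasurableSpace.CountableOrCountablyGenerated α β]
    {ν ρ : Measure α} [SigmaFinite ν] [SigmaFinite ρ] (hνρ : ν ≪ ρ)
    {κ : Kernel α β} [IsFiniteKernel κ] {ξ : Measure β} [SFinite ξ] :
    ν ⊗ₘ κ ⟂ₘ ρ.prod ξ ↔ ∀ᵐ x ∂ν, κ x ⟂ₘ ξ := by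
  calc ν ⊗ₘ κ ⟂ₘ ρ.prod ξ
      ↔ ν ⊗ₘ κ ⟂ₘ ν ⊗ₘ Kernel.const α ξ := by
        rw [← compProd_const, hνρ.mutuallySingular_compProd_iff]
    _ ↔ ν ⊗ₘ κ ⟂ₘ ν ⊗ₘ Kernel.const α ξ.toFinite :=
        ⟨fun h => h.mono_ac .rfl <| AbsolutelyContinuous.compProd_right <|
            .of_forall fun _ => toFinite_absolutelyContinuous ξ,
          fun h => h.mono_ac .rfl <| AbsolutelyContinuous.compProd_right <|
            .of_forall fun _ => absolutelyContinuous_toFinite ξ⟩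
    _ ↔ ∀ᵐ x ∂ν, κ x ⟂ₘ ξ := by
        simp only [mutuallySingular_compProd_right_iff, Kernel.const_apply,
          mutuallySingular_toFinite_iff]

end Measure

end MeasureTheory

theorem singular_iff_kernels_ae_singular_general
    (m : ℕ)
    (μ : Measure ((Fin m → ℝ) × ℝ)) (hprob : IsProbabilityMeasure μ)
    (hac : μ.map Prod.fst ≪ volume)
    (K : ProbabilityTheory.Kernel (Fin m → ℝ) ℝ) [ProbabilityTheory.IsMarkovKernel K]
    (hdis : ∀ (A : Set (Fin m → ℝ)) (B : Set ℝ), MeasurableSet A → MeasurableSet B →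
      μ (A ×ˢ B) = ∫⁻ x in A, K x B ∂(μ.map Prod.fst)) :
    μ ⟂ₘ volume ↔
      ∃ Λ : Set (Fin m → ℝ), MeasurableSet Λ ∧ (μ.map Prod.fst) Λ = 1 ∧
        ∀ x ∈ Λ, K x ⟂ₘ (volume : Measure ℝ) := by
  have hμ : μ = μ.fst ⊗ₘ K := Measure.eq_compProd_of_forall_prod hdis
  calc μ ⟂ₘ volume ↔ μ.fst ⊗ₘ K ⟂ₘ (volume : Measure (Fin m → ℝ)).prod volume := by
        rw [← hμ, Measure.volume_eq_prod]
    _ ↔ ∀ᵐ x ∂μ.fst, K x ⟂ₘ volume := Measure.compProd_mutuallySingular_prod_iff hac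
    _ ↔ _ := ae_iff_exists_measurableSet_measure_eq_one

/-- Let `μ` be a Borel probability measure on `[0,1]^m × [0,1]` whose
first marginal `ν = μ ∘ (proj)⁻¹` is absolutely continuous w.r.t. Lebesgue measure, and
let `K` be a disintegration (Markov kernel) of `μ` w.r.t. `ν`. Then `μ` is singular
w.r.t. Lebesgue measure if and only if there is a Borel set `Λ` with `ν(Λ) = 1` such
that `K(x,·)` is singular w.r.t. Lebesgue measure for every `x ∈ Λ`. -/
theorem singular_iff_kernels_ae_singular
    (m : ℕ) (hm : 1 ≤ m)
    (μ : Measure ((Fin m → ℝ) × ℝ)) (hprob : IsProbabilityMeasure μ)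
    (hcube : μ ((Set.univ.pi fun _ : Fin m => Icc (0 : ℝ) 1) ×ˢ Icc (0 : ℝ) 1) = 1)
    (hac : μ.map Prod.fst ≪ volume)
    (K : ProbabilityTheory.Kernel (Fin m → ℝ) ℝ) [ProbabilityTheory.IsMarkovKernel K]
    (hdis : ∀ (A : Set (Fin m → ℝ)) (B : Set ℝ), MeasurableSet A → MeasurableSet B →
      μ (A ×ˢ B) = ∫⁻ x in A, K x B ∂(μ.map Prod.fst)) :
    μ ⟂ₘ volume ↔
      ∃ Λ : Set (Fin m → ℝ), MeasurableSet Λ ∧ (μ.map Prod.fst) Λ = 1 ∧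
        ∀ x ∈ Λ, K x ⟂ₘ (volume : Measure ℝ) :=
  singular_iff_kernels_ae_singular_general m μ hprob hac K hdis
end
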